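/- arXiv:2408.04538 — 3 statements merged into one kernel-verified Lean document; each statement's English description precedes it below -/
import Mathlib

section
/- If G is a strongly critical graph, then G ∨ K_t is strongly critical for every natural number t. -/
/-!  Common definitions: criticality, list coloring, DP-coloring (covers). -/

/-- `G` is `k`-critical: `χ(G) = k` and every proper subgraph has chromatic number `< k`. -/
def IsKCritical {V : Type} (G : SimpleGraph V) (k : ℕ) : Prop :=
  G.chromaticNumber = (k : ℕ∞) ∧
    ∀ G' : G.Subgraph, G' ≠ ⊤ → G'.coe.chromaticNumber < (k : ℕ∞)

/-- `G` is `k`-vertex-critical: `χ(G) = k` and every proper induced subgraph has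
chromatic number `< k`. -/
def IsKVertexCritical {V : Type} (G : SimpleGraph V) (k : ℕ) : Prop :=
  G.chromaticNumber = (k : ℕ∞) ∧
    ∀ S : Set V, S ≠ Set.univ → (G.induce S).chromaticNumber < (k : ℕ∞)

/-- `G` admits a proper `L`-coloring for the list assignment `L`. -/
def IsListColorable {V α : Type} (G : SimpleGraph V) (L : V → Finset α) : Prop :=
  ∃ f : V → α, (∀ v, f v ∈ L v) ∧ ∀ ⦃u v⦄, G.Adj u v → f u ≠ f v

/-- `G` is strongly `k`-critical: it is `k`-critical and every bad `(k-1)`-assignment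
is constant. -/
def IsStronglyKCritical {V : Type} (G : SimpleGraph V) (k : ℕ) : Prop :=
  1 ≤ k ∧ IsKCritical G k ∧
    ∀ (α : Type) (L : V → Finset α), (∀ v, (L v).card = k - 1) →
      ¬ IsListColorable G L → ∀ u v : V, L u = L v

/-- `G` is strongly `k`-chromatic-choosable: it is `k`-vertex-critical and every bad
`(k-1)`-assignment is constant. -/
def IsStronglyKChromaticChoosable {V : Type} (G : SimpleGraph V) (k : ℕ) : Prop :=
  1 ≤ k ∧ IsKVertexCritical G k ∧
    ∀ (α : Type) (L : V → Finset α), (∀ v, (L v).card = k - 1) →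
      ¬ IsListColorable G L → ∀ u v : V, L u = L v

/-- A cover `ℋ = (L, H)` of a graph `G`, with colors drawn from the type `α`
(the vertex set of `H` is all of `α`). -/
structure Cover {V : Type} (G : SimpleGraph V) (α : Type) where
  /-- The graph on the colors. -/
  H : SimpleGraph α
  /-- The lists. -/
  L : V → Finset α
  /-- The lists are pairwise disjoint. -/
  disj : ∀ ⦃u v : V⦄, u ≠ v → Disjoint (L u) (L v)
  /-- Each list is independent in `H`. -/
  indep : ∀ v : V, ∀ c ∈ L v, ∀ c' ∈ L v, ¬ H.Adj c c'
  /-- The lists cover all colors: `V(H) = ⋃ v, L v`. -/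
  covers : ∀ c : α, ∃ v : V, c ∈ L v
  /-- Edges of `H` between two lists only occur above edges of `G`. -/
  adj_support : ∀ ⦃u v : V⦄ ⦃c c' : α⦄, c ∈ L u → c' ∈ L v → H.Adj c c' → G.Adj u v
  /-- The edges of `H` between two lists form a matching. -/
  matching : ∀ ⦃u v : V⦄ ⦃c c₁ c₂ : α⦄, c ∈ L u → c₁ ∈ L v → c₂ ∈ L v →
      H.Adj c c₁ → H.Adj c c₂ → c₁ = c₂

/-- `G` is `𝒞`-colorable: `𝒞` has an independent transversal. -/
def Cover.Colorable {V α : Type} {G : SimpleGraph V} (𝒞 : Cover G α) : Prop :=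
  ∃ T : V → α, (∀ v, T v ∈ 𝒞.L v) ∧ ∀ u v : V, ¬ 𝒞.H.Adj (T u) (T v)

/-- `𝒞` is a `k`-fold cover. -/
def Cover.IsKFold {V α : Type} {G : SimpleGraph V} (𝒞 : Cover G α) (k : ℕ) : Prop :=
  ∀ v : V, (𝒞.L v).card = k

/-- `𝒞` is a canonical `k`-fold cover: it admits a canonical labeling. -/
def Cover.Canonical {V α : Type} {G : SimpleGraph V} (𝒞 : Cover G α) (k : ℕ) : Prop :=
  ∃ lam : α → Fin k,
    (∀ v : V, Set.BijOn lam (𝒞.L v : Set α) Set.univ) ∧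
    ∀ ⦃u v : V⦄, G.Adj u v → ∀ c ∈ 𝒞.L u, ∀ c' ∈ 𝒞.L v,
      (𝒞.H.Adj c c' ↔ lam c = lam c')

/-- `𝒞` is full: the matching above each edge of `G` is perfect. -/
def Cover.Full {V α : Type} {G : SimpleGraph V} (𝒞 : Cover G α) : Prop :=
  ∀ ⦃u v : V⦄, G.Adj u v → ∀ c ∈ 𝒞.L u, ∃ c' ∈ 𝒞.L v, 𝒞.H.Adj c c'

/-- `G` is robustly `k`-critical: it is `k`-critical and every bad `(k-1)`-fold cover
is canonical. -/
def IsRobustlyKCritical {V : Type} (G : SimpleGraph V) (k : ℕ) : Prop :=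
  1 ≤ k ∧ IsKCritical G k ∧
    ∀ (α : Type) (𝒞 : Cover G α), 𝒞.IsKFold (k - 1) → ¬ 𝒞.Colorable →
      𝒞.Canonical (k - 1)

/-- The join `G ∨ K_t` of `G` with a complete graph on `t` vertices. -/
def joinKt {V : Type} (G : SimpleGraph V) (t : ℕ) : SimpleGraph (V ⊕ Fin t) where
  Adj x y :=
    match x, y with
    | Sum.inl u, Sum.inl v => G.Adj u v
    | Sum.inl _, Sum.inr _ => True
    | Sum.inr _, Sum.inl _ => True
    | Sum.inr i, Sum.inr j => i ≠ j
  symm := by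
    constructor
    rintro (u | i) (v | j) h
    · exact G.adj_symm h
    · trivial
    · trivial
    · exact Ne.symm h
  loopless := by
    constructor
    rintro (u | i) h
    · exact G.irrefl h
    · exact h rfl
open SimpleGraph

lemma colorable_pred_of_lt {W : Type*} {G : SimpleGraph W} {k : ℕ}
    (h : G.chromaticNumber < (k : ℕ∞)) : G.Colorable (k - 1) := by
  have hne : G.chromaticNumber ≠ ⊤ := (h.trans (WithTop.coe_lt_top k)).ne
  have hc := SimpleGraph.colorable_of_chromaticNumber_ne_top hne
  have hcoe : (G.chromaticNumber.toNat : ℕ∞) = G.chromaticNumber := ENat.coe_toNat hne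
  rw [← hcoe, Nat.cast_lt] at h
  exact hc.mono (by omega)

lemma colorable_of_chromaticNumber_eq {W : Type*} {G : SimpleGraph W} {k : ℕ}
    (h : G.chromaticNumber = (k : ℕ∞)) : G.Colorable k := by
  rw [← SimpleGraph.chromaticNumber_le_iff_colorable, h]

lemma not_colorable_of_lt {W : Type*} {G : SimpleGraph W} {k m : ℕ}
    (h : G.chromaticNumber = (k : ℕ∞)) (hm : m < k) : ¬ G.Colorable m := by
  intro hc
  have := hc.chromaticNumber_le
  rw [h, Nat.cast_le] at this
  omega

lemma chromaticNumber_eq_of {W : Type*} {G : SimpleGraph W} {k : ℕ} (hk : 1 ≤ k)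
    (h1 : G.Colorable k) (h2 : ¬ G.Colorable (k - 1)) : G.chromaticNumber = (k : ℕ∞) := by
  refine le_antisymm h1.chromaticNumber_le ?_
  by_contra hlt
  push_neg at hlt
  exact h2 ((colorable_pred_of_lt hlt))

lemma subgraph_ne_top {W : Type} {G : SimpleGraph W} {G' : G.Subgraph} (h : G' ≠ ⊤) :
    (∃ x, x ∉ G'.verts) ∨ ∃ x y, G.Adj x y ∧ ¬ G'.Adj x y := by
  by_contra hc
  push_neg at hc
  apply h
  ext x y
  · simp [hc.1 x]
  · simp only [SimpleGraph.Subgraph.top_adj]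
    exact ⟨fun ha => G'.adj_sub ha, fun ha => hc.2 x y ha⟩
open SimpleGraph Finset Function



lemma strong_sub {V : Type} {G : SimpleGraph V} {k : ℕ}
    (h : IsStronglyKCritical G k) (hk : 2 ≤ k) {p q : V} (hpq : p ≠ q)
    {α : Type} (M : V → Finset α) (hcard : ∀ v, k - 1 ≤ (M v).card)
    (hbad : ¬ IsListColorable G M) :
    (∀ v, (M v).card = k - 1) ∧ ∀ u v, M u = M v := by
  classical
  have hsubbad : ∀ S : V → Finset α, (∀ v, S v ⊆ M v) → ¬ IsListColorable G S := by
    rintro S hS ⟨f, hmem, hadj⟩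
    exact hbad ⟨f, fun v => hS v (hmem v), hadj⟩
  have C1 : ∀ S : V → Finset α, (∀ v, S v ⊆ M v) → (∀ v, (S v).card = k - 1) →
      ∀ u v, S u = S v := fun S hS hc => h.2.2 α S hc (hsubbad S hS)
  have hsub : ∀ v, ∃ s, s ⊆ M v ∧ s.card = k - 1 :=
    fun v => Finset.exists_subset_card_eq (hcard v)
  set S0 : V → Finset α := fun v => (hsub v).choose with hS0
  have hS0sub : ∀ v, S0 v ⊆ M v := fun v => (hsub v).choose_spec.1
  have hS0card : ∀ v, (S0 v).card = k - 1 := fun v => (hsub v).choose_spec.2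
  have hall : ∀ v, (M v).card = k - 1 := by
    intro v₀
    by_contra hne
    have hge : k ≤ (M v₀).card := by have := hcard v₀; omega
    obtain ⟨T, hTsub, hTcard⟩ := Finset.exists_subset_card_eq hge
    obtain ⟨a, ha, b, hb, hab⟩ := Finset.one_lt_card.mp (by omega : 1 < T.card)
    set u : V := if v₀ = p then q else p with hu
    have huv : u ≠ v₀ := by
      rw [hu]; split
      · rename_i h'; rw [h']; exact hpq.symm
      · rename_i h'; exact fun hc => h' hc.symm
    have key : ∀ s : Finset α, s ⊆ M v₀ → s.card = k - 1 → S0 u = s := by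
      intro s hssub hscard
      set S : V → Finset α := fun v => if v = v₀ then s else S0 v with hS
      have h1 : ∀ v, S v ⊆ M v := by
        intro v; rw [hS]; dsimp only; split
        · rename_i h'; rw [h']; exact hssub
        · exact hS0sub v
      have h2 : ∀ v, (S v).card = k - 1 := by
        intro v; rw [hS]; dsimp only; split
        · exact hscard
        · exact hS0card v
      have := C1 S h1 h2 u v₀
      simpa [hS, huv] using this
    have k1 : S0 u = T.erase a :=
      key _ ((Finset.erase_subset a T).trans hTsub)
        (by rw [Finset.card_erase_of_mem ha, hTcard])
    have k2 : S0 u = T.erase b :=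
      key _ ((Finset.erase_subset b T).trans hTsub)
        (by rw [Finset.card_erase_of_mem hb, hTcard])
    have : b ∈ T.erase a := Finset.mem_erase.mpr ⟨hab.symm, hb⟩
    rw [← k1, k2] at this
    exact (Finset.notMem_erase b T) this
  exact ⟨hall, C1 M (fun v => le_refl _) hall⟩
lemma sdr_exists {α : Type} [DecidableEq α] {t : ℕ} (L : Fin t → Finset α)
    (hcard : ∀ i, t ≤ (L i).card) :
    ∃ f : Fin t → α, Function.Injective f ∧ ∀ i, f i ∈ L i := by
  rw [← Finset.all_card_le_biUnion_card_iff_exists_injective]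
  intro s
  rcases s.eq_empty_or_nonempty with rfl | ⟨i, hi⟩
  · simp
  · calc s.card ≤ Finset.univ.card := Finset.card_le_univ s
      _ = t := by rw [Finset.card_univ, Fintype.card_fin]
      _ ≤ (L i).card := hcard i
      _ ≤ (s.biUnion L).card := Finset.card_le_card (Finset.subset_biUnion_of_mem L hi)

lemma sdr_exists_mem {α : Type} [DecidableEq α] {t : ℕ} (L : Fin t → Finset α)
    (hcard : ∀ i, t + 1 ≤ (L i).card) (i₀ : Fin t) (c : α) (hc : c ∈ L i₀) :
    ∃ f : Fin t → α, Function.Injective f ∧ (∀ i, f i ∈ L i) ∧ f i₀ = c := by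
  classical
  set L' : Fin t → Finset α := fun i => if i = i₀ then {c} else (L i).erase c with hL'
  have hex : ∃ f : Fin t → α, Function.Injective f ∧ ∀ i, f i ∈ L' i := by
    rw [← Finset.all_card_le_biUnion_card_iff_exists_injective]
    intro s
    by_cases hs : ∃ i ∈ s, i ≠ i₀
    · obtain ⟨i, hi, hne⟩ := hs
      have h1 : (L i).erase c ⊆ s.biUnion L' := by
        intro x hx
        exact Finset.mem_biUnion.mpr ⟨i, hi, by simp [hL', hne, hx]⟩
      have h2 : t ≤ ((L i).erase c).card := by
        have := Finset.pred_card_le_card_erase (s := L i) (a := c)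
        have := hcard i
        omega
      have h3 : s.card ≤ t := by
        have := Finset.card_le_univ s
        simpa using this

      have := Finset.card_le_card h1
      omega
    · push_neg at hs
      rcases s.eq_empty_or_nonempty with rfl | ⟨i, hi⟩
      · simp
      · have hi₀ : i₀ ∈ s := hs i hi ▸ hi
        have hcmem : c ∈ s.biUnion L' := Finset.mem_biUnion.mpr ⟨i₀, hi₀, by simp [hL']⟩
        have h4 : 1 ≤ (s.biUnion L').card := Finset.card_pos.mpr ⟨c, hcmem⟩
        have h5 : s ⊆ {i₀} := fun j hj => Finset.mem_singleton.mpr (hs j hj)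
        have := Finset.card_le_card h5
        simp only [Finset.card_singleton] at this
        omega
  obtain ⟨f, hinj, hmem⟩ := hex
  have hfi₀ : f i₀ = c := by
    have := hmem i₀
    simpa [hL'] using this
  refine ⟨f, hinj, ?_, hfi₀⟩
  intro i
  by_cases h : i = i₀
  · subst h; rw [hfi₀]; exact hc
  · have := hmem i
    simp only [hL', if_neg h] at this
    exact Finset.mem_of_mem_erase this
lemma join_list_step {V α : Type} [DecidableEq α] {G : SimpleGraph V} {k t : ℕ}
    (h : IsStronglyKCritical G k) (hk : 2 ≤ k) {p q : V} (hpq : p ≠ q)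
    (L : (V ⊕ Fin t) → Finset α) (hLcard : ∀ x, (L x).card = k + t - 1)
    (hbad : ¬ IsListColorable (joinKt G t) L)
    (f : Fin t → α) (hinj : Function.Injective f) (hmem : ∀ i, f i ∈ L (Sum.inr i)) :
    (∀ u v : V, L (Sum.inl u) = L (Sum.inl v)) ∧ ∀ i, f i ∈ L (Sum.inl p) := by
  set C : Finset α := Finset.image f Finset.univ with hC
  have hCcard : C.card = t := by
    rw [hC, Finset.card_image_of_injective _ hinj, Finset.card_univ, Fintype.card_fin]
  have hfC : ∀ i, f i ∈ C := fun i => Finset.mem_image.mpr ⟨i, Finset.mem_univ i, rfl⟩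
  set M : V → Finset α := fun v => L (Sum.inl v) \ C with hM
  have hMcard : ∀ v, k - 1 ≤ (M v).card := by
    intro v
    have h1 := Finset.le_card_sdiff C (L (Sum.inl v))
    rw [hLcard, hCcard] at h1
    have : k + t - 1 - t = k - 1 := by omega
    rwa [this] at h1
  have hMbad : ¬ IsListColorable G M := by
    rintro ⟨g, hg, hgadj⟩
    apply hbad
    refine ⟨Sum.elim g f, ?_, ?_⟩
    · rintro (v | i)
      · exact Finset.sdiff_subset (hg v)
      · exact hmem i
    · rintro (u | i) (v | j) hadj
      · exact hgadj hadj
      · intro hEq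
        simp only [Sum.elim_inl, Sum.elim_inr] at hEq
        exact (Finset.mem_sdiff.mp (hg u)).2 (hEq ▸ hfC j)
      · intro hEq
        simp only [Sum.elim_inl, Sum.elim_inr] at hEq
        exact (Finset.mem_sdiff.mp (hg v)).2 (hEq.symm ▸ hfC i)
      · exact fun hEq => hadj (hinj hEq)
  obtain ⟨hM1, hM2⟩ := strong_sub h hk hpq M hMcard hMbad
  have hCsub : ∀ v, C ⊆ L (Sum.inl v) := by
    intro v
    have h1 := Finset.card_sdiff_add_card_inter (L (Sum.inl v)) C
    have h2 : (L (Sum.inl v) ∩ C).card = t := by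
      have := hM1 v
      rw [hM] at this
      dsimp only at this
      rw [this, hLcard] at h1
      omega
    have h3 : L (Sum.inl v) ∩ C = C :=
      Finset.eq_of_subset_of_card_le Finset.inter_subset_right (by rw [h2, hCcard])
    intro x hx
    exact Finset.inter_subset_left (α := α) (h3.symm ▸ hx)
  have hLconst : ∀ u v : V, L (Sum.inl u) = L (Sum.inl v) := by
    intro u v
    have hMeq := hM2 u v
    calc L (Sum.inl u) = (L (Sum.inl u) \ C) ∪ C :=
          (Finset.sdiff_union_of_subset (hCsub u)).symm
      _ = (L (Sum.inl v) \ C) ∪ C := by rw [show L (Sum.inl u) \ C = L (Sum.inl v) \ C from hMeq]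
      _ = L (Sum.inl v) := Finset.sdiff_union_of_subset (hCsub v)
  exact ⟨hLconst, fun i => hCsub p (hfC i)⟩

lemma join_list_const {V α : Type} [DecidableEq α] {G : SimpleGraph V} {k t : ℕ}
    (h : IsStronglyKCritical G k) (hk : 2 ≤ k) {p q : V} (hpq : p ≠ q)
    (L : (V ⊕ Fin t) → Finset α) (hLcard : ∀ x, (L x).card = k + t - 1)
    (hbad : ¬ IsListColorable (joinKt G t) L) : ∀ x y, L x = L y := by
  obtain ⟨f₀, hinj₀, hmem₀⟩ := sdr_exists (fun i => L (Sum.inr i))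
    (fun i => by rw [hLcard]; omega)
  obtain ⟨hconst, _⟩ := join_list_step h hk hpq L hLcard hbad f₀ hinj₀ hmem₀
  have hinr : ∀ i, L (Sum.inr i) = L (Sum.inl p) := by
    intro i
    have hsub : L (Sum.inr i) ⊆ L (Sum.inl p) := by
      intro c hc
      obtain ⟨f, hinj, hmem, hfi⟩ := sdr_exists_mem (fun j => L (Sum.inr j))
        (fun j => by rw [hLcard]; omega) i c hc
      obtain ⟨_, hmemP⟩ := join_list_step h hk hpq L hLcard hbad f hinj hmem
      exact hfi ▸ hmemP i
    exact Finset.eq_of_subset_of_card_le hsub (by rw [hLcard, hLcard])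
  rintro (u | i) (v | j)
  · exact hconst u v
  · rw [hinr j]; exact hconst u p
  · rw [hinr i]; exact hconst p v
  · rw [hinr i, hinr j]
lemma join_colorable {V : Type} {G : SimpleGraph V} {k : ℕ} (t : ℕ) (hG : G.Colorable k) :
    (joinKt G t).Colorable (k + t) := by
  rw [SimpleGraph.colorable_iff_exists_bdd_nat_coloring] at hG ⊢
  obtain ⟨C, hC⟩ := hG
  refine ⟨SimpleGraph.Coloring.mk (Sum.elim (fun v => C v) (fun i : Fin t => k + i.val)) ?_, ?_⟩
  · rintro (u | i) (v | j) hadj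
    · exact fun hEq => C.valid hadj (by simpa using hEq)
    · show C u ≠ k + j.val
      have := hC u; omega
    · show k + i.val ≠ C v
      have := hC v; omega
    · show k + i.val ≠ k + j.val
      have hne : i.val ≠ j.val := fun hEq => hadj (Fin.ext hEq)
      omega
  · rintro (v | i)
    · show C v < k + t
      have := hC v; omega
    · show k + i.val < k + t
      have := i.isLt; omega

lemma join_not_colorable {V : Type} {G : SimpleGraph V} {k t : ℕ}
    (hχ : G.chromaticNumber = (k : ℕ∞)) (hk : 1 ≤ k) :
    ¬ (joinKt G t).Colorable (k + t - 1) := by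
  classical
  rintro ⟨C⟩
  set f : Fin t → Fin (k + t - 1) := fun i => C (Sum.inr i) with hf
  have hinj : Function.Injective f := by
    intro i j hEq
    by_contra hne
    exact C.valid (show (joinKt G t).Adj (Sum.inr i) (Sum.inr j) from hne) hEq
  set S : Finset (Fin (k + t - 1)) := Finset.image f Finset.univ with hS
  have hScard : S.card = t := by
    rw [hS, Finset.card_image_of_injective _ hinj, Finset.card_univ, Fintype.card_fin]
  have hcompl : (Sᶜ : Finset (Fin (k + t - 1))).card = k - 1 := by
    rw [Finset.card_compl, hScard, Fintype.card_fin]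
    omega
  have hGcol : G.Colorable (k - 1) := by
    have hCol : G.Coloring ↥(Sᶜ : Finset (Fin (k + t - 1))) := by
      refine SimpleGraph.Coloring.mk (fun v => ⟨C (Sum.inl v), ?_⟩) ?_
      · rw [Finset.mem_compl]
        intro hmem
        obtain ⟨i, _, hEq⟩ := Finset.mem_image.mp hmem
        exact C.valid (show (joinKt G t).Adj (Sum.inl v) (Sum.inr i) from trivial) hEq.symm
      · intro u v hadj hEq
        exact C.valid (show (joinKt G t).Adj (Sum.inl u) (Sum.inl v) from hadj)
          (by simpa using congrArg Subtype.val hEq)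
    have := hCol.colorable
    rwa [Fintype.card_coe, hcompl] at this
  exact not_colorable_of_lt hχ (by omega) hGcol

lemma k1_facts {V : Type} {G : SimpleGraph V} (h : IsKCritical G 1) :
    Subsingleton V ∧ Nonempty V := by
  constructor
  · constructor
    intro p q
    by_contra hne
    set G' : G.Subgraph := (⊤ : G.Subgraph).induce {x | x = p} with hG'
    have hne' : G' ≠ ⊤ := by
      intro hEq
      have hq : q ∈ G'.verts := by rw [hEq]; trivial
      exact hne hq.symm
    have hcol : G'.coe.Colorable 0 := colorable_pred_of_lt (h.2 G' hne')
    obtain ⟨C⟩ := hcol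
    exact (C ⟨p, rfl⟩).elim0
  · by_contra hne
    rw [not_nonempty_iff] at hne
    have := G.chromaticNumber_eq_zero_of_isEmpty
    rw [h.1] at this
    exact absurd this (by simp)

lemma exists_pair {V : Type} {G : SimpleGraph V} {k : ℕ} (h : IsKCritical G k) (hk : 2 ≤ k) :
    ∃ p q : V, p ≠ q := by
  by_contra hc
  push_neg at hc
  haveI : Subsingleton V := ⟨hc⟩
  have := G.chromaticNumber_le_one_of_subsingleton
  rw [h.1] at this
  have : k ≤ 1 := by exact_mod_cast this
  omega
def Gpart {V : Type} {G : SimpleGraph V} {t : ℕ} (H' : (joinKt G t).Subgraph) : G.Subgraph where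
  verts := {v | Sum.inl v ∈ H'.verts}
  Adj u v := H'.Adj (Sum.inl u) (Sum.inl v)
  adj_sub := fun h => H'.adj_sub h
  edge_vert := fun h => H'.edge_vert h
  symm := ⟨fun _ _ h => H'.adj_symm h⟩

lemma joinSub_caseA {V : Type} {G : SimpleGraph V} {k t : ℕ} (h : IsKCritical G k)
    (hk : 1 ≤ k) (H' : (joinKt G t).Subgraph) (hGne : Gpart H' ≠ ⊤) :
    H'.coe.Colorable (k + t - 1) := by
  have hcol : (Gpart H').coe.Colorable (k - 1) := colorable_pred_of_lt (h.2 _ hGne)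
  rw [SimpleGraph.colorable_iff_exists_bdd_nat_coloring] at hcol ⊢
  obtain ⟨c₀, hb⟩ := hcol
  refine ⟨SimpleGraph.Coloring.mk (fun x => Sum.rec (motive := fun y => y ∈ H'.verts → ℕ)
    (fun v hv => c₀ ⟨v, hv⟩) (fun i _ => (k - 1) + i.val) x.1 x.2) ?_, ?_⟩
  · rintro ⟨(u | i), hx⟩ ⟨(v | j), hy⟩ hadj
    · show c₀ ⟨u, hx⟩ ≠ c₀ ⟨v, hy⟩
      exact c₀.valid hadj
    · show c₀ ⟨u, hx⟩ ≠ (k - 1) + j.val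
      have := hb ⟨u, hx⟩; omega
    · show (k - 1) + i.val ≠ c₀ ⟨v, hy⟩
      have := hb ⟨v, hy⟩; omega
    · show (k - 1) + i.val ≠ (k - 1) + j.val
      have hij : i ≠ j := H'.adj_sub hadj
      have : i.val ≠ j.val := fun hEq => hij (Fin.ext hEq)
      omega
  · rintro ⟨(v | i), hx⟩
    · show c₀ ⟨v, hx⟩ < k + t - 1
      have := hb ⟨v, hx⟩; omega
    · show (k - 1) + i.val < k + t - 1
      have := i.isLt; omega

lemma joinSub_case2 {V : Type} {G : SimpleGraph V} {k t : ℕ} (h : IsKCritical G k)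
    (hk : 1 ≤ k) (H' : (joinKt G t).Subgraph) (i₀ : Fin t)
    (hmiss : Sum.inr i₀ ∉ H'.verts) : H'.coe.Colorable (k + t - 1) := by
  have hcol : G.Colorable k := colorable_of_chromaticNumber_eq h.1
  rw [SimpleGraph.colorable_iff_exists_bdd_nat_coloring] at hcol ⊢
  obtain ⟨cB, hb⟩ := hcol
  refine ⟨SimpleGraph.Coloring.mk (fun x => Sum.rec (motive := fun y => y ∈ H'.verts → ℕ)
    (fun v _ => cB v) (fun j _ => k + (if j.val < i₀.val then j.val else j.val - 1))
    x.1 x.2) ?_, ?_⟩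
  · rintro ⟨(u | i), hx⟩ ⟨(v | j), hy⟩ hadj
    · exact cB.valid (H'.adj_sub hadj)
    · show cB u ≠ k + _
      have := hb u; omega
    · show k + _ ≠ cB v
      have := hb v; omega
    · show k + (if i.val < i₀.val then i.val else i.val - 1) ≠
        k + (if j.val < i₀.val then j.val else j.val - 1)
      have hij : i ≠ j := H'.adj_sub hadj
      have h1 : i.val ≠ j.val := fun hEq => hij (Fin.ext hEq)
      have h2 : i.val ≠ i₀.val := fun hEq => hmiss (Fin.ext hEq ▸ hx)
      have h3 : j.val ≠ i₀.val := fun hEq => hmiss (Fin.ext hEq ▸ hy)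
      split_ifs <;> omega
  · rintro ⟨(v | j), hx⟩
    · show cB v < k + t - 1
      have := hb v
      have := i₀.isLt
      omega
    · show k + (if j.val < i₀.val then j.val else j.val - 1) < k + t - 1
      have h2 : j.val ≠ i₀.val := fun hEq => hmiss (Fin.ext hEq ▸ hx)
      have := j.isLt
      have := i₀.isLt
      split_ifs <;> omega
lemma joinSub_case4 {V : Type} {G : SimpleGraph V} {k t : ℕ} (h : IsKCritical G k)
    (hk : 1 ≤ k) (H' : (joinKt G t).Subgraph) (i₀ j₀ : Fin t) (hne : i₀ ≠ j₀)
    (hmiss : ¬ H'.Adj (Sum.inr i₀) (Sum.inr j₀)) : H'.coe.Colorable (k + t - 1) := by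
  have hmiss' : ¬ H'.Adj (Sum.inr j₀) (Sum.inr i₀) := fun ha => hmiss (H'.adj_symm ha)
  have hcol : G.Colorable k := colorable_of_chromaticNumber_eq h.1
  rw [SimpleGraph.colorable_iff_exists_bdd_nat_coloring] at hcol ⊢
  obtain ⟨cB, hb⟩ := hcol
  set ρ : Fin t → ℕ := fun m => if m.val < j₀.val then m.val else m.val - 1 with hρ
  have hρlt : ∀ m : Fin t, m ≠ j₀ → ρ m < t - 1 := by
    intro m hm
    have h1 : m.val ≠ j₀.val := fun hEq => hm (Fin.ext hEq)
    have := m.isLt; have := j₀.isLt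
    rw [hρ]; dsimp only; split_ifs <;> omega
  have hρinj : ∀ m m' : Fin t, m ≠ j₀ → m' ≠ j₀ → m ≠ m' → ρ m ≠ ρ m' := by
    intro m m' hm hm' hmm'
    have h1 : m.val ≠ j₀.val := fun hEq => hm (Fin.ext hEq)
    have h2 : m'.val ≠ j₀.val := fun hEq => hm' (Fin.ext hEq)
    have h3 : m.val ≠ m'.val := fun hEq => hmm' (Fin.ext hEq)
    rw [hρ]; dsimp only; split_ifs <;> omega
  refine ⟨SimpleGraph.Coloring.mk (fun x => Sum.rec (motive := fun y => y ∈ H'.verts → ℕ)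
    (fun v _ => cB v) (fun m _ => k + (if m = j₀ then ρ i₀ else ρ m)) x.1 x.2) ?_, ?_⟩
  · rintro ⟨(u | i), hx⟩ ⟨(v | j), hy⟩ hadj
    · exact cB.valid (H'.adj_sub hadj)
    · show cB u ≠ k + _
      have := hb u; omega
    · show k + _ ≠ cB v
      have := hb v; omega
    · show k + (if i = j₀ then ρ i₀ else ρ i) ≠ k + (if j = j₀ then ρ i₀ else ρ j)
      have hij : i ≠ j := H'.adj_sub hadj
      by_cases h1 : i = j₀ <;> by_cases h2 : j = j₀
      · exact absurd (h1.trans h2.symm) hij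
      · have hji₀ : j ≠ i₀ := fun hEq => hmiss' (by rw [← h1, ← hEq]; exact hadj)
        rw [if_pos h1, if_neg h2]
        have := hρinj i₀ j hne h2 (fun hEq => hji₀ hEq.symm)
        omega
      · have hii₀ : i ≠ i₀ := fun hEq => hmiss (by rw [← hEq, ← h2]; exact hadj)
        rw [if_pos h2, if_neg h1]
        have := hρinj i i₀ h1 hne (fun hEq => hii₀ hEq)
        omega
      · simp only [if_neg h1, if_neg h2]
        have := hρinj i j h1 h2 hij
        omega
  · rintro ⟨(v | m), hx⟩
    · show cB v < k + t - 1
      have := hb v; have := i₀.isLt; omega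
    · show k + (if m = j₀ then ρ i₀ else ρ m) < k + t - 1
      by_cases h1 : m = j₀
      · have := hρlt i₀ hne
        simp only [if_pos h1]
        omega
      · have := hρlt m h1
        simp only [if_neg h1]
        omega

lemma joinSub_case5 {V : Type} {G : SimpleGraph V} {k t : ℕ} (h : IsKCritical G k)
    (hk : 1 ≤ k) (H' : (joinKt G t).Subgraph) (v₀ : V) (i₀ : Fin t)
    (hmiss : ¬ H'.Adj (Sum.inl v₀) (Sum.inr i₀)) : H'.coe.Colorable (k + t - 1) := by
  classical
  have hmiss' : ¬ H'.Adj (Sum.inr i₀) (Sum.inl v₀) := fun ha => hmiss (H'.adj_symm ha)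
  set Gv : G.Subgraph := (⊤ : G.Subgraph).induce {v | v ≠ v₀} with hGv
  have hGvne : Gv ≠ ⊤ := by
    intro hEq
    have hv : v₀ ∈ Gv.verts := by rw [hEq]; trivial
    exact hv rfl
  have hcol : Gv.coe.Colorable (k - 1) := colorable_pred_of_lt (h.2 _ hGvne)
  rw [SimpleGraph.colorable_iff_exists_bdd_nat_coloring] at hcol ⊢
  obtain ⟨c₀, hb⟩ := hcol
  set ρ : Fin t → ℕ := fun m => if m.val < i₀.val then m.val else m.val - 1 with hρ
  have hρlt : ∀ m : Fin t, m ≠ i₀ → ρ m < t - 1 := by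
    intro m hm
    have h1 : m.val ≠ i₀.val := fun hEq => hm (Fin.ext hEq)
    have := m.isLt; have := i₀.isLt
    rw [hρ]; dsimp only; split_ifs <;> omega
  have hρinj : ∀ m m' : Fin t, m ≠ i₀ → m' ≠ i₀ → m ≠ m' → ρ m ≠ ρ m' := by
    intro m m' hm hm' hmm'
    have h1 : m.val ≠ i₀.val := fun hEq => hm (Fin.ext hEq)
    have h2 : m'.val ≠ i₀.val := fun hEq => hm' (Fin.ext hEq)
    have h3 : m.val ≠ m'.val := fun hEq => hmm' (Fin.ext hEq)
    rw [hρ]; dsimp only; split_ifs <;> omega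
  refine ⟨SimpleGraph.Coloring.mk (fun x => Sum.rec (motive := fun y => y ∈ H'.verts → ℕ)
    (fun v _ => if hv : v = v₀ then k - 1 else c₀ ⟨v, hv⟩)
    (fun m _ => if m = i₀ then k - 1 else k + ρ m) x.1 x.2) ?_, ?_⟩
  · rintro ⟨(u | i), hx⟩ ⟨(v | j), hy⟩ hadj
    · show (if hv : u = v₀ then k - 1 else c₀ ⟨u, hv⟩) ≠
        (if hv : v = v₀ then k - 1 else c₀ ⟨v, hv⟩)
      have hG : G.Adj u v := H'.adj_sub hadj
      by_cases h1 : u = v₀ <;> by_cases h2 : v = v₀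
      · exact absurd (h1.trans h2.symm ▸ hG) (G.irrefl (v := v))
      · have := hb ⟨v, h2⟩
        simp only [dif_pos h1, dif_neg h2]
        omega
      · have := hb ⟨u, h1⟩
        simp only [dif_pos h2, dif_neg h1]
        omega
      · simp only [dif_neg h1, dif_neg h2]
        exact c₀.valid (show Gv.Adj u v from ⟨h1, h2, hG⟩)
    · show (if hv : u = v₀ then k - 1 else c₀ ⟨u, hv⟩) ≠ (if j = i₀ then k - 1 else k + ρ j)
      by_cases h1 : u = v₀ <;> by_cases h2 : j = i₀
      · subst h1; subst h2; exact absurd hadj hmiss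
      · have := hρlt j h2
        simp only [dif_pos h1, if_neg h2]
        omega
      · have := hb ⟨u, h1⟩
        simp only [dif_neg h1, if_pos h2]
        omega
      · have := hb ⟨u, h1⟩
        simp only [dif_neg h1, if_neg h2]
        omega
    · show (if i = i₀ then k - 1 else k + ρ i) ≠ (if hv : v = v₀ then k - 1 else c₀ ⟨v, hv⟩)
      by_cases h1 : v = v₀ <;> by_cases h2 : i = i₀
      · subst h1; subst h2; exact absurd hadj hmiss'
      · have := hρlt i h2
        simp only [dif_pos h1, if_neg h2]
        omega
      · have := hb ⟨v, h1⟩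
        simp only [dif_neg h1, if_pos h2]
        omega
      · have := hb ⟨v, h1⟩
        simp only [dif_neg h1, if_neg h2]
        omega
    · show (if i = i₀ then k - 1 else k + ρ i) ≠ (if j = i₀ then k - 1 else k + ρ j)
      have hij : i ≠ j := H'.adj_sub hadj
      by_cases h1 : i = i₀ <;> by_cases h2 : j = i₀
      · exact absurd (h1.trans h2.symm) hij
      · simp only [if_pos h1, if_neg h2]; omega
      · simp only [if_pos h2, if_neg h1]; omega
      · simp only [if_neg h1, if_neg h2]
        have := hρinj i j h1 h2 hij
        omega
  · rintro ⟨(v | m), hx⟩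
    · show (if hv : v = v₀ then k - 1 else c₀ ⟨v, hv⟩) < k + t - 1
      have := i₀.isLt
      by_cases h1 : v = v₀
      · simp only [dif_pos h1]; omega
      · have := hb ⟨v, h1⟩
        simp only [dif_neg h1]; omega
    · show (if m = i₀ then k - 1 else k + ρ m) < k + t - 1
      have := i₀.isLt
      by_cases h1 : m = i₀
      · simp only [if_pos h1]; omega
      · have := hρlt m h1
        simp only [if_neg h1]; omega
lemma join_list_const_k1 {V α : Type} [DecidableEq α] {G : SimpleGraph V}
    [Subsingleton V] [Nonempty V] {t : ℕ}
    (L : (V ⊕ Fin t) → Finset α) (hLcard : ∀ x, (L x).card = t)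
    (hbad : ¬ IsListColorable (joinKt G t) L) : ∀ x y, L x = L y := by
  haveI : Unique V := uniqueOfSubsingleton (Classical.arbitrary V)
  by_contra hne
  push_neg at hne
  obtain ⟨x₀, y₀, hxy⟩ := hne
  apply hbad
  have hall : ∀ s : Finset (V ⊕ Fin t), s.card ≤ (s.biUnion L).card := by
    intro s
    rcases s.eq_empty_or_nonempty with rfl | ⟨x, hx⟩
    · simp
    have hsub : L x ⊆ s.biUnion L := Finset.subset_biUnion_of_mem L hx
    by_cases hle : s.card ≤ t
    · calc s.card ≤ t := hle
        _ = (L x).card := (hLcard x).symm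
        _ ≤ _ := Finset.card_le_card hsub
    · have hcardX : Fintype.card (V ⊕ Fin t) = 1 + t := by
        rw [Fintype.card_sum, Fintype.card_fin, Fintype.card_unique]
      have h1 : s.card ≤ 1 + t := by
        have := Finset.card_le_univ s
        omega

      have hcs : s.card = 1 + t := by omega
      have hsu : s = Finset.univ := Finset.eq_univ_of_card s (by rw [hcs, hcardX])
      have hx₀ : x₀ ∈ s := hsu ▸ Finset.mem_univ _
      have hy₀ : y₀ ∈ s := hsu ▸ Finset.mem_univ _
      have hsub2 : L x₀ ∪ L y₀ ⊆ s.biUnion L :=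
        Finset.union_subset (Finset.subset_biUnion_of_mem L hx₀)
          (Finset.subset_biUnion_of_mem L hy₀)
      have hcu : t + 1 ≤ (L x₀ ∪ L y₀).card := by
        by_contra hle2
        push_neg at hle2
        have h2 : L x₀ ∪ L y₀ = L x₀ := by
          refine (Finset.eq_of_subset_of_card_le Finset.subset_union_left ?_).symm
          rw [hLcard]; omega
        have h3 : L y₀ ⊆ L x₀ := h2 ▸ Finset.subset_union_right
        exact hxy (Finset.eq_of_subset_of_card_le h3 (by rw [hLcard, hLcard])).symm
      have := Finset.card_le_card hsub2
      omega
  obtain ⟨f, hinj, hmem⟩ := (Finset.all_card_le_biUnion_card_iff_exists_injective L).mp hall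
  refine ⟨f, hmem, ?_⟩
  rintro (u | i) (v | j) hadj
  · have : u = v := Subsingleton.elim u v
    subst this
    exact absurd hadj (G.irrefl (v := u))
  · exact fun hEq => Sum.inl_ne_inr (hinj hEq)
  · exact fun hEq => Sum.inr_ne_inl (hinj hEq)
  · exact fun hEq => (show i ≠ j from hadj) (Sum.inr_injective (hinj hEq))

lemma join_subgraph_colorable {V : Type} {G : SimpleGraph V} {k t : ℕ}
    (h : IsKCritical G k) (hk : 1 ≤ k) (H' : (joinKt G t).Subgraph) (hne : H' ≠ ⊤) :
    H'.coe.Colorable (k + t - 1) := by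
  rcases subgraph_ne_top hne with ⟨x, hx⟩ | ⟨x, y, hadj, hmiss⟩
  · rcases x with v₀ | i₀
    · refine joinSub_caseA h hk H' (fun hEq => hx ?_)
      have : v₀ ∈ (Gpart H').verts := by rw [hEq]; trivial
      exact this
    · exact joinSub_case2 h hk H' i₀ hx
  · rcases x with u₀ | i₀ <;> rcases y with v₀ | j₀
    · refine joinSub_caseA h hk H' (fun hEq => hmiss ?_)
      have hG : G.Adj u₀ v₀ := hadj
      have : (Gpart H').Adj u₀ v₀ := by rw [hEq]; exact hG
      exact this
    · exact joinSub_case5 h hk H' u₀ j₀ hmiss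
    · exact joinSub_case5 h hk H' v₀ i₀ (fun ha => hmiss (H'.adj_symm ha))
    · exact joinSub_case4 h hk H' i₀ j₀ hadj hmiss

/-- If `G` is strongly critical, then `G ∨ K_t` is strongly critical
for every natural number `t`. -/
theorem join_clique_strongly_critical
    {V : Type} (G : SimpleGraph V)
    (hG : ∃ k, IsStronglyKCritical G k) (t : ℕ) :
    ∃ k', IsStronglyKCritical (joinKt G t) k' := by
  obtain ⟨k, hk1, hcrit, hlist⟩ := hG
  refine ⟨k + t, by omega, ⟨?_, ?_⟩, ?_⟩
  · exact chromaticNumber_eq_of (by omega)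
      (join_colorable t (colorable_of_chromaticNumber_eq hcrit.1))
      (join_not_colorable hcrit.1 hk1)
  · intro H' hne
    have h1 := (join_subgraph_colorable hcrit hk1 H' hne).chromaticNumber_le
    refine lt_of_le_of_lt h1 ?_
    exact_mod_cast Nat.cast_lt.mpr (show k + t - 1 < k + t by omega)
  · intro α L hLc hbad
    letI : DecidableEq α := Classical.decEq α
    rcases Nat.lt_or_ge k 2 with h2 | h2
    · have hk1' : k = 1 := by omega
      subst hk1'
      obtain ⟨hsing, hnon⟩ := k1_facts hcrit
      haveI := hsing; haveI := hnon
      exact join_list_const_k1 L (fun x => by rw [hLc x]; omega) hbad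
    · obtain ⟨p, q, hpq⟩ := exists_pair hcrit h2
      exact join_list_const ⟨hk1, hcrit, hlist⟩ h2 hpq L (fun x => hLc x) hbad
end

section
/- Let G be a k-critical graph for k ≥ 1 and let ℋ be a bad (k−1)-fold cover of G. If ℋ is not full, then no full extension of ℋ is canonical. -/
/-- Let `G` be `k`-critical (`k ≥ 1`) and let `ℋ` be a bad
`(k−1)`-fold cover of `G`.  If `ℋ` is not full, then no full extension of `ℋ`
is canonical. -/
theorem no_full_extension_canonical
    {V α : Type} (G : SimpleGraph V) (k : ℕ) (hk : 1 ≤ k)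
    (hG : IsKCritical G k) (𝒞 : Cover G α)
    (hfold : 𝒞.IsKFold (k - 1)) (hbad : ¬ 𝒞.Colorable) (hnf : ¬ 𝒞.Full) :
    ∀ 𝒞' : Cover G α, 𝒞'.L = 𝒞.L → 𝒞.H ≤ 𝒞'.H → 𝒞'.Full →
      ¬ 𝒞'.Canonical (k - 1) := by
  intro 𝒞' hL hle hfull hcan
  obtain ⟨lam, hbij, hiff⟩ := hcan
  -- extract the failure of fullness
  simp only [Cover.Full] at hnf
  push_neg at hnf
  obtain ⟨u, v, huv, c, hcu, hc⟩ := hnf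
  -- the subgraph G minus the edge uv
  set G' : G.Subgraph :=
    { verts := Set.univ
      Adj := fun x y => G.Adj x y ∧ ¬(x = u ∧ y = v) ∧ ¬(x = v ∧ y = u)
      adj_sub := fun h => h.1
      edge_vert := fun _ => Set.mem_univ _
      symm := by
        constructor
        rintro x y ⟨h1, h2, h3⟩
        exact ⟨h1.symm, fun ⟨a, b⟩ => h3 ⟨b, a⟩, fun ⟨a, b⟩ => h2 ⟨b, a⟩⟩ } with hG'
  have hne : G' ≠ ⊤ := by
    intro h
    have : G'.Adj u v := by rw [h]; exact huv
    exact this.2.1 ⟨rfl, rfl⟩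
  have hlt := hG.2 G' hne
  have hk1 : (k : ℕ∞) = ((k - 1 : ℕ) : ℕ∞) + 1 := by
    norm_cast
    omega
  rw [hk1, ENat.lt_add_one_iff (by simp)] at hlt
  have hcol : G'.coe.Colorable (k - 1) :=
    SimpleGraph.chromaticNumber_le_iff_colorable.mp hlt
  obtain ⟨g⟩ := hcol
  have g0 : V → Fin (k - 1) := fun x => g ⟨x, Set.mem_univ x⟩
  clear g0
  set g0 : V → Fin (k - 1) := fun x => g ⟨x, Set.mem_univ x⟩ with hg0
  have hg0p : ∀ ⦃x y : V⦄, G'.Adj x y → g0 x ≠ g0 y := by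
    intro x y hxy
    exact g.valid (by exact hxy)
  -- permute to make f u = lam c
  set σ : Equiv.Perm (Fin (k - 1)) := Equiv.swap (g0 u) (lam c) with hσ
  set f : V → Fin (k - 1) := fun x => σ (g0 x) with hf
  have hfu : f u = lam c := by simp [hf, hσ]
  have hfp : ∀ ⦃x y : V⦄, G'.Adj x y → f x ≠ f y := by
    intro x y hxy h
    exact hg0p hxy (σ.injective h)
  -- build the transversal
  have hT : ∀ x : V, ∃ a ∈ 𝒞.L x, lam a = f x := by
    intro x
    have := (hbij x).surjOn (Set.mem_univ (f x))
    obtain ⟨a, ha, ha'⟩ := this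
    rw [hL] at ha
    exact ⟨a, ha, ha'⟩
  choose T hTmem hTlam using hT
  apply hbad
  refine ⟨T, hTmem, ?_⟩
  intro x y hadj
  have hGxy : G.Adj x y := 𝒞.adj_support (hTmem x) (hTmem y) hadj
  have hadj' : 𝒞'.H.Adj (T x) (T y) := hle hadj
  have hlamxy : lam (T x) = lam (T y) := by
    have := hiff hGxy (T x) (by rw [hL]; exact hTmem x) (T y) (by rw [hL]; exact hTmem y)
    exact this.mp hadj'
  by_cases hcase : (x = u ∧ y = v) ∨ (x = v ∧ y = u)
  · rcases hcase with ⟨rfl, rfl⟩ | ⟨rfl, rfl⟩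
    · have hTu : T x = c := by
        have h1 : lam (T x) = lam c := by rw [hTlam x, hfu]
        exact (hbij x).injOn (by rw [hL]; exact hTmem x) (by rw [hL]; exact hcu) h1
      exact hc (T y) (hTmem y) (hTu ▸ hadj)
    · have hTu : T y = c := by
        have h1 : lam (T y) = lam c := by rw [hTlam y, hfu]
        exact (hbij y).injOn (by rw [hL]; exact hTmem y) (by rw [hL]; exact hcu) h1
      exact hc (T x) (hTmem x) (hTu ▸ hadj.symm)
  · push_neg at hcase
    have hG'xy : G'.Adj x y := ⟨hGxy, fun ⟨a, b⟩ => hcase.1 a b, fun ⟨a, b⟩ => hcase.2 a b⟩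
    exact hfp hG'xy (by rw [← hTlam x, ← hTlam y, hlamxy])
end

section
/- Let G be a critical graph and let x, y ∈ V(G) be two non-adjacent vertices with at most one common neighbor. If G − x − y is robustly critical, then G is robustly critical as well. -/
open Classical

namespace RC


variable {V : Type} {W : Type}

lemma colorable_pred_of_lt {G' : SimpleGraph W} {k : ℕ}
    (h : G'.chromaticNumber < (k : ℕ∞)) : G'.Colorable (k - 1) := by
  have hne : G'.chromaticNumber ≠ ⊤ := ne_top_of_lt h
  obtain ⟨n, hn⟩ := WithTop.ne_top_iff_exists.mp hne
  have hnk : n < k := by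
    rw [← hn] at h
    exact Nat.cast_lt.mp h
  rw [← SimpleGraph.chromaticNumber_le_iff_colorable, ← hn]
  exact Nat.cast_le.mpr (Nat.le_sub_one_of_lt hnk)

lemma not_colorable_of_eq {G : SimpleGraph V} {k n : ℕ} (h : G.chromaticNumber = (k : ℕ∞))
    (hn : n < k) : ¬ G.Colorable n := by
  intro hc
  have := hc.chromaticNumber_le
  rw [h] at this
  exact absurd (by exact_mod_cast this) (by omega)

/-- The subgraph of `G` induced on a set `S`. -/
def setSubgraph (G : SimpleGraph V) (S : Set V) : G.Subgraph where
  verts := S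
  Adj u v := u ∈ S ∧ v ∈ S ∧ G.Adj u v
  adj_sub h := h.2.2
  edge_vert h := h.1
  symm := ⟨fun u v h => ⟨h.2.1, h.1, h.2.2.symm⟩⟩

lemma setSubgraph_ne_top (G : SimpleGraph V) {S : Set V} {v : V} (hv : v ∉ S) :
    setSubgraph G S ≠ ⊤ := by
  intro h
  have : (setSubgraph G S).verts = (⊤ : G.Subgraph).verts := by rw [h]
  rw [SimpleGraph.Subgraph.verts_top] at this
  have hv' : v ∈ (setSubgraph G S).verts := by rw [this]; trivial
  exact hv hv'

lemma colorable_induce_of_crit {G : SimpleGraph V} {k : ℕ} (S : Set V) {v : V} (hv : v ∉ S)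
    (hcrit : ∀ G' : G.Subgraph, G' ≠ ⊤ → G'.coe.chromaticNumber < (k : ℕ∞)) :
    (G.induce S).Colorable (k - 1) := by
  have h1 := hcrit (setSubgraph G S) (setSubgraph_ne_top G hv)
  obtain ⟨C⟩ := colorable_pred_of_lt h1
  exact ⟨SimpleGraph.Coloring.mk (fun a => C ⟨a.1, a.2⟩)
    (fun {a b} h => C.valid ⟨a.2, b.2, h⟩)⟩

/-- Constancy along walks. -/
lemma walk_constant {G : SimpleGraph V} {β : Type} {f : V → β}
    (hf : ∀ u v, G.Adj u v → f u = f v) {u v : V} (p : G.Walk u v) : f u = f v := by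
  induction p with
  | nil => rfl
  | cons h _ ih => exact (hf _ _ h).trans ih


variable {V α : Type} {G : SimpleGraph V}

noncomputable def owner (𝒞 : Cover G α) (a : α) : V := (𝒞.covers a).choose

lemma owner_mem (𝒞 : Cover G α) (a : α) : a ∈ 𝒞.L (owner 𝒞 a) := (𝒞.covers a).choose_spec

lemma owner_eq (𝒞 : Cover G α) {a : α} {v : V} (h : a ∈ 𝒞.L v) : owner 𝒞 a = v := by
  by_contra hne
  exact (Finset.disjoint_left.mp (𝒞.disj hne) (owner_mem 𝒞 a)) h

/-- uniqueness of the partner of `c` inside a list. -/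
lemma match_right (𝒞 : Cover G α) {u v : V} {c c₁ c₂ : α} (hc : c ∈ 𝒞.L u)
    (h1 : c₁ ∈ 𝒞.L v) (h2 : c₂ ∈ 𝒞.L v) (a1 : 𝒞.H.Adj c c₁) (a2 : 𝒞.H.Adj c c₂) : c₁ = c₂ :=
  𝒞.matching hc h1 h2 a1 a2

/-- `GoodPair c d`: the forbidden colors coming from `c` and `d` never clash. -/
def GoodPair (𝒞 : Cover G α) (c d : α) : Prop :=
  ∀ v : V, ∀ e₁ ∈ 𝒞.L v, ∀ e₂ ∈ 𝒞.L v, 𝒞.H.Adj e₁ c → 𝒞.H.Adj e₂ d → e₁ = e₂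

lemma forb_unique (𝒞 : Cover G α) {x y : V} {c d : α} (hc : c ∈ 𝒞.L x) (hd : d ∈ 𝒞.L y)
    (hg : GoodPair 𝒞 c d) {v : V} {e₁ e₂ : α} (h1 : e₁ ∈ 𝒞.L v) (h2 : e₂ ∈ 𝒞.L v)
    (f1 : 𝒞.H.Adj e₁ c ∨ 𝒞.H.Adj e₁ d) (f2 : 𝒞.H.Adj e₂ c ∨ 𝒞.H.Adj e₂ d) : e₁ = e₂ := by
  rcases f1 with f1 | f1 <;> rcases f2 with f2 | f2
  · exact match_right 𝒞 hc h1 h2 f1.symm f2.symm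
  · exact hg v e₁ h1 e₂ h2 f1 f2
  · exact (hg v e₂ h2 e₁ h1 f2 f1).symm
  · exact match_right 𝒞 hd h1 h2 f1.symm f2.symm

/-- a "drop function" for the reduction along `(c, d)`. -/
def IsDrop (𝒞 : Cover G α) (S : Set V) (c d : α) (δ : V → α) : Prop :=
  ∀ v ∈ S, δ v ∈ 𝒞.L v ∧ ∀ e ∈ 𝒞.L v, (𝒞.H.Adj e c ∨ 𝒞.H.Adj e d) → e = δ v

lemma exists_drop (𝒞 : Cover G α) (S : Set V) {x y : V} {c d : α}
    (hc : c ∈ 𝒞.L x) (hd : d ∈ 𝒞.L y) (hg : GoodPair 𝒞 c d)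
    (hne : ∀ v : V, (𝒞.L v).Nonempty) : ∃ δ, IsDrop 𝒞 S c d δ := by
  refine ⟨fun v => if h : ∃ e ∈ 𝒞.L v, (𝒞.H.Adj e c ∨ 𝒞.H.Adj e d) then h.choose
    else (hne v).choose, fun v hv => ?_⟩
  dsimp only
  by_cases h : ∃ e ∈ 𝒞.L v, (𝒞.H.Adj e c ∨ 𝒞.H.Adj e d)
  · rw [dif_pos h]
    exact ⟨h.choose_spec.1, fun e he hf =>
      forb_unique 𝒞 hc hd hg he h.choose_spec.1 hf h.choose_spec.2⟩
  · rw [dif_neg h]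
    exact ⟨(hne v).choose_spec, fun e he hf => absurd ⟨e, he, hf⟩ h⟩

lemma exists_drop_at (𝒞 : Cover G α) (S : Set V) {x y : V} {c d : α}
    (hc : c ∈ 𝒞.L x) (hd : d ∈ 𝒞.L y) (hg : GoodPair 𝒞 c d)
    (hne : ∀ v : V, (𝒞.L v).Nonempty) {v₁ : V} {z : α} (hz1 : z ∈ 𝒞.L v₁)
    (hz2 : ∀ e ∈ 𝒞.L v₁, (𝒞.H.Adj e c ∨ 𝒞.H.Adj e d) → e = z) :
    ∃ δ, IsDrop 𝒞 S c d δ ∧ δ v₁ = z := by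
  obtain ⟨δ₀, hδ₀⟩ := exists_drop 𝒞 S hc hd hg hne
  refine ⟨fun v => if v = v₁ then z else δ₀ v, fun v hv => ?_, by simp⟩
  dsimp only
  by_cases h : v = v₁
  · subst h; simpa using ⟨hz1, hz2⟩
  · rw [if_neg h]; exact hδ₀ v hv

def redSet (𝒞 : Cover G α) (S : Set V) (δ : V → α) : Set α :=
  {a | ∃ v ∈ S, a ∈ 𝒞.L v ∧ a ≠ δ v}

/-- The reduced cover of `G.induce S`. -/
noncomputable def redCover (𝒞 : Cover G α) (S : Set V) (δ : V → α) :
    Cover (G.induce S) ↥(redSet 𝒞 S δ) where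
  H := SimpleGraph.induce (redSet 𝒞 S δ) 𝒞.H
  L v := ((𝒞.L v.1).erase (δ v.1)).subtype _
  disj := by
    intro u v huv
    rw [Finset.disjoint_left]
    intro a ha hb
    rw [Finset.mem_subtype, Finset.mem_erase] at ha hb
    have huv' : u.1 ≠ v.1 := fun h => huv (Subtype.ext h)
    exact (Finset.disjoint_left.mp (𝒞.disj huv') ha.2) hb.2
  indep := by
    intro v a ha b hb hAdj
    rw [Finset.mem_subtype, Finset.mem_erase] at ha hb
    exact 𝒞.indep v.1 a.1 ha.2 b.1 hb.2 hAdj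
  covers := by
    intro a
    obtain ⟨v, hvS, hmem, hne⟩ := a.2
    exact ⟨⟨v, hvS⟩, by rw [Finset.mem_subtype, Finset.mem_erase]; exact ⟨hne, hmem⟩⟩
  adj_support := by
    intro u v a b ha hb hAdj
    rw [Finset.mem_subtype, Finset.mem_erase] at ha hb
    exact 𝒞.adj_support ha.2 hb.2 hAdj
  matching := by
    intro u v a b₁ b₂ ha hb1 hb2 h1 h2
    rw [Finset.mem_subtype, Finset.mem_erase] at ha hb1 hb2
    exact Subtype.ext (𝒞.matching ha.2 hb1.2 hb2.2 h1 h2)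

lemma redCover_mem {𝒞 : Cover G α} {S : Set V} {δ : V → α} {v : ↥S}
    {a : ↥(redSet 𝒞 S δ)} : a ∈ (redCover 𝒞 S δ).L v ↔ a.1 ∈ 𝒞.L v.1 ∧ a.1 ≠ δ v.1 := by
  rw [redCover, Finset.mem_subtype, Finset.mem_erase]; tauto

lemma redCover_adj {𝒞 : Cover G α} {S : Set V} {δ : V → α}
    {a b : ↥(redSet 𝒞 S δ)} : (redCover 𝒞 S δ).H.Adj a b ↔ 𝒞.H.Adj a.1 b.1 := Iff.rfl

lemma redCover_fold {𝒞 : Cover G α} {S : Set V} {c d : α} {δ : V → α} {m : ℕ}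
    (hfold : 𝒞.IsKFold m) (hdrop : IsDrop 𝒞 S c d δ) :
    (redCover 𝒞 S δ).IsKFold (m - 1) := by
  intro v
  show (((𝒞.L v.1).erase (δ v.1)).subtype _).card = m - 1
  rw [Finset.card_subtype, Finset.filter_true_of_mem, Finset.card_erase_of_mem
    (hdrop v.1 v.2).1, hfold v.1]
  intro a ha
  rw [Finset.mem_erase] at ha
  exact ⟨v.1, v.2, ha.2, ha.1⟩

lemma redCover_bad (𝒞 : Cover G α) {S : Set V} {x y : V} {c d : α} {δ : V → α}
    (hxy : x ≠ y) (hSin : ∀ v, v ∉ S → v = x ∨ v = y) (hadj : ¬ G.Adj x y)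
    (hc : c ∈ 𝒞.L x) (hd : d ∈ 𝒞.L y) (hdrop : IsDrop 𝒞 S c d δ)
    (hbad : ¬ 𝒞.Colorable) : ¬ (redCover 𝒞 S δ).Colorable := by
  rintro ⟨T', hT'mem, hT'ind⟩
  apply hbad
  refine ⟨fun v => if hv : v ∈ S then (T' ⟨v, hv⟩).1 else if v = x then c else d, ?_, ?_⟩
  · intro v
    dsimp only
    by_cases hv : v ∈ S
    · rw [dif_pos hv]
      exact (redCover_mem.mp (hT'mem ⟨v, hv⟩)).1
    · rw [dif_neg hv]
      rcases hSin v hv with h | h <;> subst h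
      · rw [if_pos rfl]; exact hc
      · rw [if_neg (Ne.symm hxy)]; exact hd
  · have key : ∀ u : V, ∀ hu : u ∈ S, ∀ b, (b = c ∨ b = d) →
        ¬ 𝒞.H.Adj (T' ⟨u, hu⟩).1 b := by
      intro u hu b hb hA
      have hmem := redCover_mem.mp (hT'mem ⟨u, hu⟩)
      have hforb : 𝒞.H.Adj (T' ⟨u, hu⟩).1 c ∨ 𝒞.H.Adj (T' ⟨u, hu⟩).1 d := by
        rcases hb with h | h
        · subst h; exact Or.inl hA
        · subst h; exact Or.inr hA
      exact hmem.2 ((hdrop u hu).2 _ hmem.1 hforb)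
    intro u v
    dsimp only
    by_cases hu : u ∈ S <;> by_cases hv : v ∈ S
    · rw [dif_pos hu, dif_pos hv]
      intro hA
      exact hT'ind ⟨u, hu⟩ ⟨v, hv⟩ (redCover_adj.mpr hA)
    · rw [dif_pos hu, dif_neg hv]
      intro hA
      refine key u hu _ ?_ hA
      rcases hSin v hv with h | h <;> subst h
      · rw [if_pos rfl]; exact Or.inl rfl
      · rw [if_neg (Ne.symm hxy)]; exact Or.inr rfl
    · rw [dif_neg hu, dif_pos hv]
      intro hA
      refine key v hv _ ?_ hA.symm
      rcases hSin u hu with h | h <;> subst h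
      · rw [if_pos rfl]; exact Or.inl rfl
      · rw [if_neg (Ne.symm hxy)]; exact Or.inr rfl
    · rcases hSin u hu with h | h <;> subst h <;> rcases hSin v hv with h' | h'
      · subst h'
        rw [dif_neg hu, if_pos rfl]
        exact 𝒞.H.irrefl
      · subst h'
        rw [dif_neg hu, dif_neg hv, if_pos rfl, if_neg (Ne.symm hxy)]
        intro hA
        exact hadj (𝒞.adj_support hc hd hA)
      · subst h'
        rw [dif_neg hu, dif_neg hv, if_neg (Ne.symm hxy), if_pos rfl]
        intro hA
        exact hadj (𝒞.adj_support hc hd hA.symm)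
      · subst h'
        rw [dif_neg hu, if_neg (Ne.symm hxy)]
        exact 𝒞.H.irrefl

lemma red_perfect {𝒞 : Cover G α} {S : Set V} {δ : V → α} {m : ℕ}
    {lam : ↥(redSet 𝒞 S δ) → Fin m}
    (hbij : ∀ v, Set.BijOn lam ((redCover 𝒞 S δ).L v : Set _) Set.univ)
    (hedge : ∀ ⦃u v⦄, (G.induce S).Adj u v → ∀ a ∈ (redCover 𝒞 S δ).L u,
      ∀ b ∈ (redCover 𝒞 S δ).L v, ((redCover 𝒞 S δ).H.Adj a b ↔ lam a = lam b))
    {u v : ↥S} (huv : (G.induce S).Adj u v) {a : ↥(redSet 𝒞 S δ)}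
    (ha : a ∈ (redCover 𝒞 S δ).L u) :
    ∃ b ∈ (redCover 𝒞 S δ).L v, 𝒞.H.Adj a.1 b.1 := by
  obtain ⟨b, hb, hlam⟩ := (hbij v).2.2 (Set.mem_univ (lam a))
  exact ⟨b, hb, redCover_adj.mp ((hedge huv a ha b hb).mpr hlam.symm)⟩

lemma filter_nonadj_card {𝒞 : Cover G α} {m : ℕ} (hfold : 𝒞.IsKFold m) {u v : V} {a : α}
    (ha : a ∈ 𝒞.L u) :
    m - 1 ≤ ((𝒞.L v).filter (fun e => ¬ 𝒞.H.Adj a e)).card := by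
  have h1 : ((𝒞.L v).filter (fun e => 𝒞.H.Adj a e)).card ≤ 1 := by
    rw [Finset.card_le_one]
    intro b hb c hc
    rw [Finset.mem_filter] at hb hc
    exact match_right 𝒞 ha hb.1 hc.1 hb.2 hc.2
  have h2 : ((𝒞.L v).filter (fun e => 𝒞.H.Adj a e)).card
      + ((𝒞.L v).filter (fun e => ¬ 𝒞.H.Adj a e)).card = m := by
    rw [← hfold (v := v)]
    simpa using Finset.card_filter_add_card_filter_not
      (s := 𝒞.L v) (p := fun e => 𝒞.H.Adj a e)
  omega

lemma exists_nonpartner {𝒞 : Cover G α} {m : ℕ} (hfold : 𝒞.IsKFold m) (hm : 2 ≤ m)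
    {u v : V} {a : α} (ha : a ∈ 𝒞.L u) : ∃ c ∈ 𝒞.L v, ¬ 𝒞.H.Adj a c := by
  have := filter_nonadj_card hfold ha (v := v)
  have hne : ((𝒞.L v).filter (fun e => ¬ 𝒞.H.Adj a e)).Nonempty := by
    rw [← Finset.card_pos]; omega
  obtain ⟨c, hc⟩ := hne
  rw [Finset.mem_filter] at hc
  exact ⟨c, hc.1, hc.2⟩

lemma exists_unmatched {𝒞 : Cover G α} {m : ℕ} (hfold : 𝒞.IsKFold m) (hm : 1 ≤ m)
    {y w : V} {e₀ : α} (he₀ : e₀ ∈ 𝒞.L w)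
    (hd : ¬ ∃ d ∈ 𝒞.L y, 𝒞.H.Adj e₀ d) :
    ∃ d ∈ 𝒞.L y, ∀ e ∈ 𝒞.L w, ¬ 𝒞.H.Adj e d := by
  by_contra hcon
  push_neg at hcon
  set f : α → α := fun d0 => if h : ∃ e ∈ 𝒞.L w, 𝒞.H.Adj e d0 then h.choose else d0 with hfdef
  have hf : ∀ d0 ∈ 𝒞.L y, f d0 ∈ 𝒞.L w ∧ 𝒞.H.Adj (f d0) d0 := by
    intro d0 hd0
    obtain ⟨e, he, hae⟩ := hcon d0 hd0
    have hex : ∃ e ∈ 𝒞.L w, 𝒞.H.Adj e d0 := ⟨e, he, hae⟩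
    rw [hfdef]
    dsimp only
    rw [dif_pos hex]
    exact ⟨hex.choose_spec.1, hex.choose_spec.2⟩
  have hmaps : ∀ d0 ∈ 𝒞.L y, f d0 ∈ (𝒞.L w).erase e₀ := by
    intro d0 hd0
    rw [Finset.mem_erase]
    refine ⟨fun h => hd ⟨d0, hd0, ?_⟩, (hf d0 hd0).1⟩
    rw [← h]; exact (hf d0 hd0).2
  have hinj : Set.InjOn f (𝒞.L y) := by
    intro d1 hd1 d2 hd2 heq
    exact match_right 𝒞 (hf d1 hd1).1 hd1 hd2 (hf d1 hd1).2 (heq ▸ (hf d2 hd2).2)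
  have := Finset.card_le_card_of_injOn f hmaps hinj
  rw [Finset.card_erase_of_mem he₀, hfold y, hfold w] at this
  omega

lemma exists_good_fixed (𝒞 : Cover G α) {x y : V} {m : ℕ} (hfold : 𝒞.IsKFold m) (hm : 2 ≤ m)
    (hcom : ∀ v₁ v₂ : V, G.Adj x v₁ → G.Adj y v₁ → G.Adj x v₂ → G.Adj y v₂ → v₁ = v₂)
    {c : α} (hc : c ∈ 𝒞.L x) : ∃ d ∈ 𝒞.L y, GoodPair 𝒞 c d := by
  have hLy : (𝒞.L y).Nonempty := by rw [← Finset.card_pos, hfold y]; omega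
  by_cases hw : ∃ w, G.Adj x w ∧ G.Adj y w
  · obtain ⟨w, hxw, hyw⟩ := hw
    by_cases hec : ∃ e ∈ 𝒞.L w, 𝒞.H.Adj e c
    · obtain ⟨e₀, he₀, hae⟩ := hec
      by_cases hdm : ∃ d ∈ 𝒞.L y, 𝒞.H.Adj e₀ d
      · obtain ⟨d, hdmem, hade⟩ := hdm
        refine ⟨d, hdmem, fun v e₁ h1 e₂ h2 a1 a2 => ?_⟩
        have hv : v = w := hcom v w (𝒞.adj_support h1 hc a1).symm
          (𝒞.adj_support h2 hdmem a2).symm hxw hyw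
        subst hv
        have he1 : e₁ = e₀ := match_right 𝒞 hc h1 he₀ a1.symm hae.symm
        have he2 : e₂ = e₀ := match_right 𝒞 hdmem h2 he₀ a2.symm hade.symm
        rw [he1, he2]
      · obtain ⟨d, hdmem, hdun⟩ := exists_unmatched hfold (by omega) he₀ hdm
        refine ⟨d, hdmem, fun v e₁ h1 e₂ h2 a1 a2 => ?_⟩
        have hv : v = w := hcom v w (𝒞.adj_support h1 hc a1).symm
          (𝒞.adj_support h2 hdmem a2).symm hxw hyw
        subst hv
        exact absurd a2 (hdun e₂ h2)
    · obtain ⟨d, hdmem⟩ := hLy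
      refine ⟨d, hdmem, fun v e₁ h1 e₂ h2 a1 a2 => ?_⟩
      have hv : v = w := hcom v w (𝒞.adj_support h1 hc a1).symm
        (𝒞.adj_support h2 hdmem a2).symm hxw hyw
      subst hv
      exact absurd ⟨e₁, h1, a1⟩ hec
  · obtain ⟨d, hdmem⟩ := hLy
    refine ⟨d, hdmem, fun v e₁ h1 e₂ h2 a1 a2 => ?_⟩
    exact absurd ⟨v, (𝒞.adj_support h1 hc a1).symm, (𝒞.adj_support h2 hdmem a2).symm⟩ hw

lemma exists_good_protect (𝒞 : Cover G α) {x y : V} {m : ℕ} (hfold : 𝒞.IsKFold m) (hm : 3 ≤ m)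
    (hcom : ∀ v₁ v₂ : V, G.Adj x v₁ → G.Adj y v₁ → G.Adj x v₂ → G.Adj y v₂ → v₁ = v₂)
    {u : V} {a : α} (ha : a ∈ 𝒞.L u) :
    ∃ c ∈ 𝒞.L x, ∃ d ∈ 𝒞.L y, ¬ 𝒞.H.Adj a c ∧ ¬ 𝒞.H.Adj a d ∧ GoodPair 𝒞 c d := by
  by_cases hw : ∃ w, G.Adj x w ∧ G.Adj y w
  · obtain ⟨w, hxw, hyw⟩ := hw
    classical
    set C := (𝒞.L x).filter (fun e => ¬ 𝒞.H.Adj a e) with hCdef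
    set D := (𝒞.L y).filter (fun e => ¬ 𝒞.H.Adj a e) with hDdef
    have hCcard : m - 1 ≤ C.card := filter_nonadj_card hfold ha
    have hDcard : m - 1 ≤ D.card := filter_nonadj_card hfold ha
    have hCsub : ∀ c0 ∈ C, c0 ∈ 𝒞.L x ∧ ¬ 𝒞.H.Adj a c0 := by
      intro c0 hc0; rw [hCdef, Finset.mem_filter] at hc0; exact hc0
    have hDsub : ∀ d0 ∈ D, d0 ∈ 𝒞.L y ∧ ¬ 𝒞.H.Adj a d0 := by
      intro d0 hd0; rw [hDdef, Finset.mem_filter] at hd0; exact hd0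
    by_cases h1 : ∃ c0 ∈ C, ∀ e ∈ 𝒞.L w, ¬ 𝒞.H.Adj e c0
    · obtain ⟨c, hcC, hcun⟩ := h1
      obtain ⟨d, hdmem, hdna⟩ := exists_nonpartner hfold (by omega) ha (v := y)
      refine ⟨c, (hCsub c hcC).1, d, hdmem, (hCsub c hcC).2, hdna,
        fun v e₁ h1' e₂ h2' a1 a2 => ?_⟩
      have hv : v = w := hcom v w (𝒞.adj_support h1' (hCsub c hcC).1 a1).symm
        (𝒞.adj_support h2' hdmem a2).symm hxw hyw
      subst hv
      exact absurd a1 (hcun e₁ h1')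
    · push_neg at h1
      by_cases h2 : ∃ d0 ∈ D, ∀ e ∈ 𝒞.L w, ¬ 𝒞.H.Adj e d0
      · obtain ⟨d, hdD, hdun⟩ := h2
        have hCne : C.Nonempty := by rw [← Finset.card_pos]; omega
        obtain ⟨c, hcC⟩ := hCne
        refine ⟨c, (hCsub c hcC).1, d, (hDsub d hdD).1, (hCsub c hcC).2, (hDsub d hdD).2,
          fun v e₁ h1' e₂ h2' a1 a2 => ?_⟩
        have hv : v = w := hcom v w (𝒞.adj_support h1' (hCsub c hcC).1 a1).symm
          (𝒞.adj_support h2' (hDsub d hdD).1 a2).symm hxw hyw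
        subst hv
        exact absurd a2 (hdun e₂ h2')
      · push_neg at h2
        set f : α → α := fun c0 => if h : ∃ e ∈ 𝒞.L w, 𝒞.H.Adj e c0 then h.choose else a
          with hfdef
        have hfspec : ∀ c0, (∃ e ∈ 𝒞.L w, 𝒞.H.Adj e c0) →
            f c0 ∈ 𝒞.L w ∧ 𝒞.H.Adj (f c0) c0 := by
          intro c0 hex
          rw [hfdef]; dsimp only
          rw [dif_pos hex]
          exact ⟨hex.choose_spec.1, hex.choose_spec.2⟩
        have hfC : ∀ c0 ∈ C, f c0 ∈ 𝒞.L w ∧ 𝒞.H.Adj (f c0) c0 :=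
          fun c0 hc0 => hfspec c0 (h1 c0 hc0)
        have hfD : ∀ d0 ∈ D, f d0 ∈ 𝒞.L w ∧ 𝒞.H.Adj (f d0) d0 :=
          fun d0 hd0 => hfspec d0 (h2 d0 hd0)
        have hinjC : Set.InjOn f C := by
          intro c1 h1' c2 h2' heq
          exact match_right 𝒞 (hfC c1 h1').1 (hCsub c1 h1').1 (hCsub c2 h2').1
            (hfC c1 h1').2 (heq ▸ (hfC c2 h2').2)
        have hinjD : Set.InjOn f D := by
          intro c1 h1' c2 h2' heq
          exact match_right 𝒞 (hfD c1 h1').1 (hDsub c1 h1').1 (hDsub c2 h2').1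
            (hfD c1 h1').2 (heq ▸ (hfD c2 h2').2)
        have hsub : C.image f ∪ D.image f ⊆ 𝒞.L w := by
          apply Finset.union_subset <;> intro e he <;> rw [Finset.mem_image] at he
          · obtain ⟨c0, hc0, rfl⟩ := he; exact (hfC c0 hc0).1
          · obtain ⟨d0, hd0, rfl⟩ := he; exact (hfD d0 hd0).1
        have hcardsum := Finset.card_inter_add_card_union (C.image f) (D.image f)
        have hxcard : (C.image f).card = C.card := Finset.card_image_of_injOn hinjC
        have hycard : (D.image f).card = D.card := Finset.card_image_of_injOn hinjD
        have huni : (C.image f ∪ D.image f).card ≤ m := by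
          rw [← hfold (v := w)]; exact Finset.card_le_card hsub
        have hint : (C.image f ∩ D.image f).Nonempty := by
          rw [← Finset.card_pos]; omega
        obtain ⟨e', he'⟩ := hint
        rw [Finset.mem_inter, Finset.mem_image, Finset.mem_image] at he'
        obtain ⟨⟨c, hcC, hce⟩, ⟨d, hdD, hde⟩⟩ := he'
        refine ⟨c, (hCsub c hcC).1, d, (hDsub d hdD).1, (hCsub c hcC).2, (hDsub d hdD).2,
          fun v e₁ h1' e₂ h2' a1 a2 => ?_⟩
        have hv : v = w := hcom v w (𝒞.adj_support h1' (hCsub c hcC).1 a1).symm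
          (𝒞.adj_support h2' (hDsub d hdD).1 a2).symm hxw hyw
        subst hv
        have he1 : e₁ = f c := match_right 𝒞 (hCsub c hcC).1 h1' (hfC c hcC).1
          a1.symm (hfC c hcC).2.symm
        have he2 : e₂ = f d := match_right 𝒞 (hDsub d hdD).1 h2' (hfD d hdD).1
          a2.symm (hfD d hdD).2.symm
        rw [he1, he2, hce, hde]
  · obtain ⟨c, hcmem, hcna⟩ := exists_nonpartner hfold (by omega) ha (v := x)
    obtain ⟨d, hdmem, hdna⟩ := exists_nonpartner hfold (by omega) ha (v := y)
    exact ⟨c, hcmem, d, hdmem, hcna, hdna, fun v e₁ h1 e₂ h2 a1 a2 =>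
      absurd ⟨v, (𝒞.adj_support h1 hcmem a1).symm, (𝒞.adj_support h2 hdmem a2).symm⟩ hw⟩

/-- Assemble: obtain a canonical reduced cover from a good pair & drop. -/
lemma red_canonical {𝒞 : Cover G α} {S : Set V} {x y : V} {c d : α} {δ : V → α} {m : ℕ}
    (hxy : x ≠ y) (hSin : ∀ v, v ∉ S → v = x ∨ v = y) (hadj : ¬ G.Adj x y)
    (hc : c ∈ 𝒞.L x) (hd : d ∈ 𝒞.L y) (hdrop : IsDrop 𝒞 S c d δ)
    (hfold : 𝒞.IsKFold m) (hbad : ¬ 𝒞.Colorable)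
    (hcan : ∀ (β : Type) (𝒟 : Cover (G.induce S) β), 𝒟.IsKFold (m-1) → ¬ 𝒟.Colorable →
      𝒟.Canonical (m-1)) :
    (redCover 𝒞 S δ).Canonical (m-1) :=
  hcan _ _ (redCover_fold hfold hdrop) (redCover_bad 𝒞 hxy hSin hadj hc hd hdrop hbad)

/-- Every color has a partner in the list of any `G`-neighbor inside `S`. -/
lemma full_matching {𝒞 : Cover G α} {S : Set V} {x y : V} {m : ℕ}
    (hxy : x ≠ y) (hSin : ∀ v, v ∉ S → v = x ∨ v = y) (hadj : ¬ G.Adj x y)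
    (hcom : ∀ v₁ v₂ : V, G.Adj x v₁ → G.Adj y v₁ → G.Adj x v₂ → G.Adj y v₂ → v₁ = v₂)
    (hfold : 𝒞.IsKFold m) (hm : 3 ≤ m) (hbad : ¬ 𝒞.Colorable)
    (hcan : ∀ (β : Type) (𝒟 : Cover (G.induce S) β), 𝒟.IsKFold (m-1) → ¬ 𝒟.Colorable →
      𝒟.Canonical (m-1))
    {u v : V} (hu : u ∈ S) (hv : v ∈ S) (huv : G.Adj u v) {a : α} (ha : a ∈ 𝒞.L u) :
    ∃ b ∈ 𝒞.L v, 𝒞.H.Adj a b := by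
  obtain ⟨c, hc, d, hd, hnac, hnad, hgood⟩ := exists_good_protect 𝒞 hfold hm hcom ha
  -- build a drop function avoiding `a` at `u`
  have hz : ∃ z ∈ 𝒞.L u, z ≠ a ∧ ∀ e ∈ 𝒞.L u, (𝒞.H.Adj e c ∨ 𝒞.H.Adj e d) → e = z := by
    by_cases hforb : ∃ e ∈ 𝒞.L u, (𝒞.H.Adj e c ∨ 𝒞.H.Adj e d)
    · obtain ⟨z, hzmem, hzf⟩ := hforb
      refine ⟨z, hzmem, ?_, fun e he hf => forb_unique 𝒞 hc hd hgood he hzmem hf hzf⟩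
      rintro rfl
      rcases hzf with h | h
      · exact hnac h
      · exact hnad h
    · have hne : ((𝒞.L u).erase a).Nonempty := by
        rw [← Finset.card_pos, Finset.card_erase_of_mem ha, hfold u]; omega
      obtain ⟨z, hz⟩ := hne
      rw [Finset.mem_erase] at hz
      exact ⟨z, hz.2, hz.1, fun e he hf => absurd ⟨e, he, hf⟩ hforb⟩
  obtain ⟨z, hzmem, hzne, hzuniq⟩ := hz
  have hLne : ∀ w : V, (𝒞.L w).Nonempty := by
    intro w; rw [← Finset.card_pos, hfold w]; omega
  obtain ⟨δ, hdrop, hδu⟩ := exists_drop_at 𝒞 S hc hd hgood hLne hzmem hzuniq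
  obtain ⟨lam, hbij, hedge⟩ := red_canonical hxy hSin hadj hc hd hdrop hfold hbad hcan
  have haR : a ∈ redSet 𝒞 S δ := ⟨u, hu, ha, by rw [hδu]; exact fun h => hzne h.symm⟩
  have haL : (⟨a, haR⟩ : ↥(redSet 𝒞 S δ)) ∈ (redCover 𝒞 S δ).L ⟨u, hu⟩ :=
    redCover_mem.mpr ⟨ha, by rw [hδu]; exact fun h => hzne h.symm⟩
  have huv' : (G.induce S).Adj ⟨u, hu⟩ ⟨v, hv⟩ := huv
  obtain ⟨b, hb, hab⟩ := red_perfect hbij hedge huv' haL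
  exact ⟨b.1, (redCover_mem.mp hb).1, hab⟩


lemma exists_lambda {𝒞 : Cover G α} {S : Set V} {x y : V} {m : ℕ}
    (hxy : x ≠ y) (hSin : ∀ v, v ∉ S → v = x ∨ v = y) (hadj : ¬ G.Adj x y)
    (hcom : ∀ v₁ v₂ : V, G.Adj x v₁ → G.Adj y v₁ → G.Adj x v₂ → G.Adj y v₂ → v₁ = v₂)
    (hfold : 𝒞.IsKFold m) (hm : 3 ≤ m) (hbad : ¬ 𝒞.Colorable)
    (hcan : ∀ (β : Type) (𝒟 : Cover (G.induce S) β), 𝒟.IsKFold (m-1) → ¬ 𝒟.Colorable →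
      𝒟.Canonical (m-1)) :
    ∃ Λ : α → Fin m,
      (∀ v ∈ S, Set.BijOn Λ (𝒞.L v : Set α) Set.univ) ∧
      (∀ u ∈ S, ∀ v ∈ S, G.Adj u v → ∀ a ∈ 𝒞.L u, ∀ b ∈ 𝒞.L v,
        (𝒞.H.Adj a b ↔ Λ a = Λ b)) := by
  have hLne : ∀ w : V, (𝒞.L w).Nonempty := by
    intro w; rw [← Finset.card_pos, hfold w]; omega
  obtain ⟨c₀, hc₀⟩ := hLne x
  obtain ⟨d₀, hd₀, hgood₀⟩ := exists_good_fixed 𝒞 hfold (by omega) hcom hc₀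
  obtain ⟨δ₀, hdrop₀⟩ := exists_drop 𝒞 S hc₀ hd₀ hgood₀ hLne
  obtain ⟨lam₀, hbij₀, hedge₀⟩ :=
    red_canonical hxy hSin hadj hc₀ hd₀ hdrop₀ hfold hbad hcan
  have hm' : m - 1 ≤ m := by omega
  set last : Fin m := ⟨m-1, by omega⟩ with hlastdef
  set Λ : α → Fin m := fun a =>
    if h : a ∈ redSet 𝒞 S δ₀ then Fin.castLE hm' (lam₀ ⟨a, h⟩) else last with hΛdef
  have redL : ∀ {v : V} (hv : v ∈ S) {a : α} (ha : a ∈ 𝒞.L v) (hne : a ≠ δ₀ v),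
      (⟨a, ⟨v, hv, ha, hne⟩⟩ : ↥(redSet 𝒞 S δ₀)) ∈ (redCover 𝒞 S δ₀).L ⟨v, hv⟩ :=
    fun {v} hv {a} ha hne => redCover_mem.mpr ⟨ha, hne⟩
  have spec1 : ∀ {v : V} (hv : v ∈ S) {a : α} (ha : a ∈ 𝒞.L v) (hne : a ≠ δ₀ v),
      Λ a = Fin.castLE hm' (lam₀ ⟨a, ⟨v, hv, ha, hne⟩⟩) := by
    intro v hv a ha hne
    have h : a ∈ redSet 𝒞 S δ₀ := ⟨v, hv, ha, hne⟩
    rw [hΛdef]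
    exact dif_pos h
  have spec2 : ∀ {v : V}, v ∈ S → ∀ {a : α}, a ∈ 𝒞.L v → a = δ₀ v → Λ a = last := by
    intro v hv a ha hae
    have h : a ∉ redSet 𝒞 S δ₀ := by
      rintro ⟨v', hv', ha', hne'⟩
      have hv'v : v' = v := by
        by_contra hne
        exact (Finset.disjoint_left.mp (𝒞.disj hne) ha') ha
      rw [hv'v] at hne'
      exact hne' hae
    rw [hΛdef]
    exact dif_neg h
  have hemb_ne_last : ∀ t : Fin (m-1), Fin.castLE hm' t ≠ last := by
    intro t h
    have h1 : (Fin.castLE hm' t).1 = t.1 := rfl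
    have h2 : (last).1 = m - 1 := rfl
    have h3 := t.2
    rw [h] at h1
    omega
  have hemb_inj : ∀ t₁ t₂ : Fin (m-1), Fin.castLE hm' t₁ = Fin.castLE hm' t₂ → t₁ = t₂ := by
    intro t₁ t₂ h
    exact Fin.ext (show (Fin.castLE hm' t₁).1 = (Fin.castLE hm' t₂).1 from congrArg Fin.val h)
  have noadj : ∀ {u v : V} (hu : u ∈ S) (hv : v ∈ S), G.Adj u v →
      ∀ {a : α} (ha : a ∈ 𝒞.L u) (hnea : a ≠ δ₀ u), ¬ 𝒞.H.Adj a (δ₀ v) := by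
    intro u v hu hv huv a ha hnea hAdj
    obtain ⟨p, hp, hap⟩ := red_perfect hbij₀ hedge₀
      (show (G.induce S).Adj ⟨u, hu⟩ ⟨v, hv⟩ from huv) (redL hu ha hnea)
    have hpL := redCover_mem.mp hp
    exact hpL.2 (match_right 𝒞 ha hpL.1 (hdrop₀ v hv).1 hap hAdj)
  have adj_dropped : ∀ {u v : V} (hu : u ∈ S) (hv : v ∈ S), G.Adj u v →
      𝒞.H.Adj (δ₀ u) (δ₀ v) := by
    intro u v hu hv huv
    obtain ⟨p, hpL, hp⟩ := full_matching hxy hSin hadj hcom hfold hm hbad hcan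
      hu hv huv (hdrop₀ u hu).1
    by_cases hpe : p = δ₀ v
    · rwa [hpe] at hp
    · obtain ⟨q, hq, hpq⟩ := red_perfect hbij₀ hedge₀
        (show (G.induce S).Adj ⟨v, hv⟩ ⟨u, hu⟩ from huv.symm) (redL hv hpL hpe)
      have hqL := redCover_mem.mp hq
      exact absurd (match_right 𝒞 hpL hqL.1 (hdrop₀ u hu).1 hpq hp.symm) hqL.2
  refine ⟨Λ, ?_, ?_⟩
  · intro v hv
    refine ⟨fun a _ => Set.mem_univ _, ?_, ?_⟩
    · intro a ha b hb heq
      rw [Finset.mem_coe] at ha hb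
      by_cases hna : a = δ₀ v <;> by_cases hnb : b = δ₀ v
      · rw [hna, hnb]
      · rw [spec2 hv ha hna, spec1 hv hb hnb] at heq
        exact absurd heq.symm (hemb_ne_last _)
      · rw [spec1 hv ha hna, spec2 hv hb hnb] at heq
        exact absurd heq (hemb_ne_last _)
      · rw [spec1 hv ha hna, spec1 hv hb hnb] at heq
        have h2 := (hbij₀ ⟨v, hv⟩).2.1 (redL hv ha hna) (redL hv hb hnb)
          (hemb_inj _ _ heq)
        exact congrArg Subtype.val h2
    · intro t _
      by_cases ht : t.1 = m - 1
      · refine ⟨δ₀ v, ?_, ?_⟩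
        · rw [Finset.mem_coe]; exact (hdrop₀ v hv).1
        · rw [spec2 hv (hdrop₀ v hv).1 rfl, hlastdef]
          exact Fin.ext ht.symm
      · have ht2 : t.1 < m - 1 := by have := t.2; omega
        obtain ⟨b, hbL, hlam⟩ := (hbij₀ ⟨v, hv⟩).2.2 (Set.mem_univ (⟨t.1, ht2⟩ : Fin (m-1)))
        have hbm := redCover_mem.mp hbL
        refine ⟨b.1, by rw [Finset.mem_coe]; exact hbm.1, ?_⟩
        rw [spec1 hv hbm.1 hbm.2]
        have hb' : (⟨b.1, ⟨v, hv, hbm.1, hbm.2⟩⟩ : ↥(redSet 𝒞 S δ₀)) = b := Subtype.ext rfl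
        rw [hb', hlam]
        exact Fin.ext rfl
  · intro u hu v hv huv a ha b hb
    by_cases hna : a = δ₀ u <;> by_cases hnb : b = δ₀ v
    · constructor
      · intro _
        rw [spec2 hu ha hna, spec2 hv hb hnb]
      · intro _
        rw [hna, hnb]
        exact adj_dropped hu hv huv
    · constructor
      · intro hA
        rw [hna] at hA
        exact absurd hA.symm (noadj hv hu huv.symm hb hnb)
      · intro heq
        rw [spec2 hu ha hna, spec1 hv hb hnb] at heq
        exact absurd heq.symm (hemb_ne_last _)
    · constructor
      · intro hA
        rw [hnb] at hA
        exact absurd hA (noadj hu hv huv ha hna)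
      · intro heq
        rw [spec1 hu ha hna, spec2 hv hb hnb] at heq
        exact absurd heq (hemb_ne_last _)
    · have hiff := hedge₀ (show (G.induce S).Adj ⟨u, hu⟩ ⟨v, hv⟩ from huv)
        _ (redL hu ha hna) _ (redL hv hb hnb)
      rw [spec1 hu ha hna, spec1 hv hb hnb]
      constructor
      · intro hA
        exact congrArg (Fin.castLE hm') (hiff.mp (redCover_adj.mpr hA))
      · intro heq
        exact redCover_adj.mp (hiff.mpr (hemb_inj _ _ heq))

lemma goodpair_symm {𝒞 : Cover G α} {c d : α} (h : GoodPair 𝒞 c d) : GoodPair 𝒞 d c :=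
  fun v e₁ h1 e₂ h2 a1 a2 => (h v e₂ h2 e₁ h1 a2 a1).symm

lemma drop_level_const {𝒞 : Cover G α} {S : Set V} {x y : V} {m : ℕ}
    (hxy : x ≠ y) (hSin : ∀ v, v ∉ S → v = x ∨ v = y) (hadj : ¬ G.Adj x y)
    (hfold : 𝒞.IsKFold m) (hbad : ¬ 𝒞.Colorable)
    (hcan : ∀ (β : Type) (𝒟 : Cover (G.induce S) β), 𝒟.IsKFold (m-1) → ¬ 𝒟.Colorable →
      𝒟.Canonical (m-1))
    (hconn : ∀ u v : ↥S, (G.induce S).Reachable u v)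
    {Λ : α → Fin m}
    (hΛbij : ∀ v ∈ S, Set.BijOn Λ (𝒞.L v : Set α) Set.univ)
    (hΛedge : ∀ u ∈ S, ∀ v ∈ S, G.Adj u v → ∀ a ∈ 𝒞.L u, ∀ b ∈ 𝒞.L v,
      (𝒞.H.Adj a b ↔ Λ a = Λ b))
    {c d : α} (hc : c ∈ 𝒞.L x) (hd : d ∈ 𝒞.L y) {δ : V → α} (hdrop : IsDrop 𝒞 S c d δ) :
    ∀ u, u ∈ S → ∀ v, v ∈ S → Λ (δ u) = Λ (δ v) := by
  obtain ⟨lam, hbij, hedge⟩ := red_canonical hxy hSin hadj hc hd hdrop hfold hbad hcan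
  have step : ∀ p q : ↥S, (G.induce S).Adj p q → Λ (δ p.1) = Λ (δ q.1) := by
    intro p q hpq
    by_contra hne
    obtain ⟨a, haL, haΛ⟩ := (hΛbij p.1 p.2).2.2 (Set.mem_univ (Λ (δ q.1)))
    rw [Finset.mem_coe] at haL
    have hane : a ≠ δ p.1 := by
      rintro rfl
      exact hne haΛ
    have haR : (⟨a, ⟨p.1, p.2, haL, hane⟩⟩ : ↥(redSet 𝒞 S δ)) ∈ (redCover 𝒞 S δ).L p :=
      redCover_mem.mpr ⟨haL, hane⟩
    obtain ⟨b, hbL, hab⟩ := red_perfect hbij hedge hpq haR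
    have hbm := redCover_mem.mp hbL
    have hΛab := (hΛedge p.1 p.2 q.1 q.2 hpq a haL b.1 hbm.1).mp hab
    have hbδ : b.1 = δ q.1 := by
      apply (hΛbij q.1 q.2).2.1 (by rw [Finset.mem_coe]; exact hbm.1)
        (by rw [Finset.mem_coe]; exact (hdrop q.1 q.2).1)
      rw [← hΛab, haΛ]
    exact hbm.2 hbδ
  intro u hu v hv
  obtain ⟨w⟩ := hconn ⟨u, hu⟩ ⟨v, hv⟩
  exact walk_constant (f := fun p : ↥S => Λ (δ p.1)) step w

lemma cover_colorable_of_avoid {𝒞 : Cover G α} {S : Set V} {x y : V} {m : ℕ}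
    (hxy : x ≠ y) (hSin : ∀ v, v ∉ S → v = x ∨ v = y) (hadj : ¬ G.Adj x y)
    {Λ : α → Fin m}
    (hΛbij : ∀ v ∈ S, Set.BijOn Λ (𝒞.L v : Set α) Set.univ)
    (hΛedge : ∀ u ∈ S, ∀ v ∈ S, G.Adj u v → ∀ a ∈ 𝒞.L u, ∀ b ∈ 𝒞.L v,
      (𝒞.H.Adj a b ↔ Λ a = Λ b))
    {c d : α} (hc : c ∈ 𝒞.L x) (hd : d ∈ 𝒞.L y)
    (φ : (G.induce S).Coloring (Fin m))
    (hcx : ∀ v, ∀ hv : v ∈ S, G.Adj x v → ∀ b ∈ 𝒞.L v, 𝒞.H.Adj c b → Λ b ≠ φ ⟨v, hv⟩)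
    (hcy : ∀ v, ∀ hv : v ∈ S, G.Adj y v → ∀ b ∈ 𝒞.L v, 𝒞.H.Adj d b → Λ b ≠ φ ⟨v, hv⟩) :
    𝒞.Colorable := by
  have pick : ∀ v, ∀ hv : v ∈ S, ∃ b, b ∈ 𝒞.L v ∧ Λ b = φ ⟨v, hv⟩ := by
    intro v hv
    obtain ⟨b, hb, hbΛ⟩ := (hΛbij v hv).2.2 (Set.mem_univ (φ ⟨v, hv⟩))
    rw [Finset.mem_coe] at hb
    exact ⟨b, hb, hbΛ⟩
  refine ⟨fun v => if hv : v ∈ S then (pick v hv).choose else if v = x then c else d, ?_, ?_⟩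
  · intro v
    dsimp only
    by_cases hv : v ∈ S
    · rw [dif_pos hv]; exact (pick v hv).choose_spec.1
    · rw [dif_neg hv]
      rcases hSin v hv with h | h <;> subst h
      · rw [if_pos rfl]; exact hc
      · rw [if_neg (Ne.symm hxy)]; exact hd
  · have hS_x : ∀ u, ∀ hu : u ∈ S, ¬ 𝒞.H.Adj ((pick u hu).choose) c := by
      intro u hu hA
      have hxu : G.Adj x u :=
        (𝒞.adj_support (pick u hu).choose_spec.1 hc hA).symm
      exact hcx u hu hxu _ (pick u hu).choose_spec.1 hA.symm (pick u hu).choose_spec.2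
    have hS_y : ∀ u, ∀ hu : u ∈ S, ¬ 𝒞.H.Adj ((pick u hu).choose) d := by
      intro u hu hA
      have hyu : G.Adj y u :=
        (𝒞.adj_support (pick u hu).choose_spec.1 hd hA).symm
      exact hcy u hu hyu _ (pick u hu).choose_spec.1 hA.symm (pick u hu).choose_spec.2
    intro u v
    dsimp only
    by_cases hu : u ∈ S <;> by_cases hv : v ∈ S
    · rw [dif_pos hu, dif_pos hv]
      intro hA
      have huv : G.Adj u v :=
        𝒞.adj_support (pick u hu).choose_spec.1 (pick v hv).choose_spec.1 hA
      have heq := (hΛedge u hu v hv huv _ (pick u hu).choose_spec.1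
        _ (pick v hv).choose_spec.1).mp hA
      rw [(pick u hu).choose_spec.2, (pick v hv).choose_spec.2] at heq
      exact φ.valid (show (G.induce S).Adj ⟨u, hu⟩ ⟨v, hv⟩ from huv) heq
    · rw [dif_pos hu, dif_neg hv]
      rcases hSin v hv with h | h <;> subst h
      · rw [if_pos rfl]; exact hS_x u hu
      · rw [if_neg (Ne.symm hxy)]; exact hS_y u hu
    · rw [dif_neg hu, dif_pos hv]
      intro hA
      rcases hSin u hu with h | h <;> subst h
      · rw [if_pos rfl] at hA
        exact hS_x v hv hA.symm
      · rw [if_neg (Ne.symm hxy)] at hA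
        exact hS_y v hv hA.symm
    · rcases hSin u hu with h | h <;> subst h <;> rcases hSin v hv with h' | h'
      · subst h'
        rw [dif_neg hu, if_pos rfl]
        exact 𝒞.H.irrefl
      · subst h'
        rw [dif_neg hu, dif_neg hv, if_pos rfl, if_neg (Ne.symm hxy)]
        intro hA
        exact hadj (𝒞.adj_support hc hd hA)
      · subst h'
        rw [dif_neg hu, dif_neg hv, if_neg (Ne.symm hxy), if_pos rfl]
        intro hA
        exact hadj (𝒞.adj_support hc hd hA.symm)
      · subst h'
        rw [dif_neg hu, if_neg (Ne.symm hxy)]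
        exact 𝒞.H.irrefl

lemma no_partner_absurd {𝒞 : Cover G α} {S : Set V} {x y : V} {m : ℕ}
    (hxy : x ≠ y) (hSin : ∀ v, v ∉ S → v = x ∨ v = y) (hxS : x ∉ S)
    (hadj : ¬ G.Adj x y)
    (hcom : ∀ v₁ v₂ : V, G.Adj x v₁ → G.Adj y v₁ → G.Adj x v₂ → G.Adj y v₂ → v₁ = v₂)
    (hfold : 𝒞.IsKFold m) (hm : 3 ≤ m) (hbad : ¬ 𝒞.Colorable)
    (hcan : ∀ (β : Type) (𝒟 : Cover (G.induce S) β), 𝒟.IsKFold (m-1) → ¬ 𝒟.Colorable →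
      𝒟.Canonical (m-1))
    (hconn : ∀ u v : ↥S, (G.induce S).Reachable u v)
    {Λ : α → Fin m}
    (hΛbij : ∀ v ∈ S, Set.BijOn Λ (𝒞.L v : Set α) Set.univ)
    (hΛedge : ∀ u ∈ S, ∀ v ∈ S, G.Adj u v → ∀ a ∈ 𝒞.L u, ∀ b ∈ 𝒞.L v,
      (𝒞.H.Adj a b ↔ Λ a = Λ b))
    (hGScol : (G.induce S).Colorable m)
    (hGxcol : (G.induce {v : V | v ≠ x}).Colorable m)
    {c : α} (hc : c ∈ 𝒞.L x)
    (hempty : ∀ v, v ∈ S → G.Adj x v → ∀ b ∈ 𝒞.L v, ¬ 𝒞.H.Adj c b) : False := by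
  have hLne : ∀ w : V, (𝒞.L w).Nonempty := by
    intro w; rw [← Finset.card_pos, hfold w]; omega
  have hcom' : ∀ v₁ v₂ : V, G.Adj y v₁ → G.Adj x v₁ → G.Adj y v₂ → G.Adj x v₂ → v₁ = v₂ :=
    fun v₁ v₂ h1 h2 h3 h4 => hcom v₁ v₂ h2 h1 h4 h3
  obtain ⟨d₀, hd₀⟩ := hLne y
  by_cases hd0 : ∃ v, v ∈ S ∧ G.Adj y v ∧ ∃ b ∈ 𝒞.L v, 𝒞.H.Adj d₀ b
  · obtain ⟨v₃, hv₃S, hyv₃, b₃, hb₃, hdb₃⟩ := hd0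
    have hconst : ∀ v, v ∈ S → ∀ b ∈ 𝒞.L v, 𝒞.H.Adj d₀ b → Λ b = Λ b₃ := by
      intro v hvS b hb hAdj
      obtain ⟨c', hc', hgood'⟩ := exists_good_fixed 𝒞 hfold (by omega) hcom' hd₀
      have hgood : GoodPair 𝒞 c' d₀ := goodpair_symm hgood'
      obtain ⟨δ, hdrop⟩ := exists_drop 𝒞 S hc' hd₀ hgood hLne
      have h1 : b = δ v := (hdrop v hvS).2 b hb (Or.inr hAdj.symm)
      have h2 : b₃ = δ v₃ := (hdrop v₃ hv₃S).2 b₃ hb₃ (Or.inr hdb₃.symm)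
      rw [h1, h2]
      exact drop_level_const hxy hSin hadj hfold hbad hcan hconn hΛbij hΛedge
        hc' hd₀ hdrop v hvS v₃ hv₃S
    obtain ⟨ψ⟩ := hGxcol
    have hyne : y ∈ {v : V | v ≠ x} := Ne.symm hxy
    have hSne : ∀ v : ↥S, v.1 ∈ {v : V | v ≠ x} := fun v h => hxS (h ▸ v.2)
    set e : Fin m ≃ Fin m := Equiv.swap (ψ ⟨y, hyne⟩) (Λ b₃) with hedef
    set φ : (G.induce S).Coloring (Fin m) := SimpleGraph.Coloring.mk
      (fun v : ↥S => e (ψ ⟨v.1, hSne v⟩))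
      (by
        intro a b hab
        intro heq
        have := e.injective heq
        exact ψ.valid (show (G.induce {v : V | v ≠ x}).Adj ⟨a.1, hSne a⟩ ⟨b.1, hSne b⟩
          from hab) this) with hφdef
    have havoid : ∀ v, ∀ hv : v ∈ S, G.Adj y v → φ ⟨v, hv⟩ ≠ Λ b₃ := by
      intro v hv hyv heq
      have h1 : e (ψ ⟨y, hyne⟩) = Λ b₃ := Equiv.swap_apply_left _ _
      have h2 : ψ ⟨v, hSne ⟨v, hv⟩⟩ = ψ ⟨y, hyne⟩ := e.injective (by
        rw [hφdef] at heq
        exact heq.trans h1.symm)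
      exact ψ.valid (show (G.induce {v : V | v ≠ x}).Adj ⟨y, hyne⟩ ⟨v, hSne ⟨v, hv⟩⟩
        from hyv) h2.symm
    apply hbad
    refine cover_colorable_of_avoid hxy hSin hadj hΛbij hΛedge hc hd₀ φ ?_ ?_
    · intro v hv hxv b hb hA
      exact absurd hA (hempty v hv hxv b hb)
    · intro v hv hyv b hb hA heq
      rw [hconst v hv b hb hA] at heq
      exact havoid v hv hyv heq.symm
  · obtain ⟨φ⟩ := hGScol
    apply hbad
    refine cover_colorable_of_avoid hxy hSin hadj hΛbij hΛedge hc hd₀ φ ?_ ?_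
    · intro v hv hxv b hb hA
      exact absurd hA (hempty v hv hxv b hb)
    · intro v hv hyv b hb hA
      exact absurd ⟨v, hv, hyv, b, hb, hA⟩ hd0

lemma side_structure {𝒞 : Cover G α} {S : Set V} {x y : V} {m : ℕ}
    (hxy : x ≠ y) (hSin : ∀ v, v ∉ S → v = x ∨ v = y) (hxS : x ∉ S)
    (hadj : ¬ G.Adj x y)
    (hcom : ∀ v₁ v₂ : V, G.Adj x v₁ → G.Adj y v₁ → G.Adj x v₂ → G.Adj y v₂ → v₁ = v₂)
    (hfold : 𝒞.IsKFold m) (hm : 3 ≤ m) (hbad : ¬ 𝒞.Colorable)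
    (hcan : ∀ (β : Type) (𝒟 : Cover (G.induce S) β), 𝒟.IsKFold (m-1) → ¬ 𝒟.Colorable →
      𝒟.Canonical (m-1))
    (hconn : ∀ u v : ↥S, (G.induce S).Reachable u v)
    {Λ : α → Fin m}
    (hΛbij : ∀ v ∈ S, Set.BijOn Λ (𝒞.L v : Set α) Set.univ)
    (hΛedge : ∀ u ∈ S, ∀ v ∈ S, G.Adj u v → ∀ a ∈ 𝒞.L u, ∀ b ∈ 𝒞.L v,
      (𝒞.H.Adj a b ↔ Λ a = Λ b))
    (hGScol : (G.induce S).Colorable m)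
    (hGxcol : (G.induce {v : V | v ≠ x}).Colorable m) :
    ∀ c ∈ 𝒞.L x, ∃ s : Fin m,
      ∀ v, v ∈ S → G.Adj x v → ∃ b ∈ 𝒞.L v, 𝒞.H.Adj c b ∧ Λ b = s := by
  intro c hc
  have hLne : ∀ w : V, (𝒞.L w).Nonempty := by
    intro w; rw [← Finset.card_pos, hfold w]; omega
  by_cases hcase : ∃ v, v ∈ S ∧ G.Adj x v ∧ ∃ b ∈ 𝒞.L v, 𝒞.H.Adj c b
  · obtain ⟨v₂, hv₂S, hxv₂, b₂, hb₂, hcb₂⟩ := hcase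
    refine ⟨Λ b₂, ?_⟩
    have key : ∀ d', d' ∈ 𝒞.L y → GoodPair 𝒞 c d' → ∀ δ, IsDrop 𝒞 S c d' δ →
        ∀ v, v ∈ S → Λ (δ v) = Λ b₂ := by
      intro d' hd' hgood δ hdropδ v hvS
      have hb2δ : b₂ = δ v₂ := (hdropδ v₂ hv₂S).2 b₂ hb₂ (Or.inl hcb₂.symm)
      rw [hb2δ]
      exact drop_level_const hxy hSin hadj hfold hbad hcan hconn hΛbij hΛedge
        hc hd' hdropδ v hvS v₂ hv₂S
    intro v hvS hxv
    by_cases hp : ∃ b ∈ 𝒞.L v, 𝒞.H.Adj c b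
    · obtain ⟨b, hb, hcb⟩ := hp
      refine ⟨b, hb, hcb, ?_⟩
      obtain ⟨d, hd, hgood⟩ := exists_good_fixed 𝒞 hfold (by omega) hcom hc
      obtain ⟨δ, hdropδ⟩ := exists_drop 𝒞 S hc hd hgood hLne
      have hbδ : b = δ v := (hdropδ v hvS).2 b hb (Or.inl hcb.symm)
      rw [hbδ]
      exact key d hd hgood δ hdropδ v hvS
    · exfalso
      have twoz : ∀ d, d ∈ 𝒞.L y → GoodPair 𝒞 c d →
          (∀ e ∈ 𝒞.L v, ¬ (𝒞.H.Adj e c ∨ 𝒞.H.Adj e d)) → False := by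
        intro d hd hgood hforbnone
        obtain ⟨z₁, z₂, hz₁, hz₂, hzne⟩ : ∃ z₁ z₂, z₁ ∈ 𝒞.L v ∧ z₂ ∈ 𝒞.L v ∧ z₁ ≠ z₂ := by
          have : 1 < (𝒞.L v).card := by rw [hfold v]; omega
          obtain ⟨z₁, hz₁, z₂, hz₂, h⟩ := Finset.one_lt_card.mp this
          exact ⟨z₁, z₂, hz₁, hz₂, h⟩
        obtain ⟨δ₁, hdrop₁, hδ₁⟩ := exists_drop_at 𝒞 S hc hd hgood hLne hz₁
          (fun e he hf => absurd hf (hforbnone e he))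
        obtain ⟨δ₂, hdrop₂, hδ₂⟩ := exists_drop_at 𝒞 S hc hd hgood hLne hz₂
          (fun e he hf => absurd hf (hforbnone e he))
        have e1 : Λ z₁ = Λ b₂ := by rw [← hδ₁]; exact key d hd hgood δ₁ hdrop₁ v hvS
        have e2 : Λ z₂ = Λ b₂ := by rw [← hδ₂]; exact key d hd hgood δ₂ hdrop₂ v hvS
        exact hzne ((hΛbij v hvS).2.1 (by rw [Finset.mem_coe]; exact hz₁)
          (by rw [Finset.mem_coe]; exact hz₂) (e1.trans e2.symm))
      by_cases hyv : G.Adj y v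
      · have hgoodany : ∀ d' ∈ 𝒞.L y, GoodPair 𝒞 c d' := by
          intro d' hd' v' e₁ h1 e₂ h2 a1 a2
          have hv'v : v' = v := hcom v' v (𝒞.adj_support h1 hc a1).symm
            (𝒞.adj_support h2 hd' a2).symm hxv hyv
          subst hv'v
          exact absurd ⟨e₁, h1, a1.symm⟩ hp
        by_cases hdun : ∃ d' ∈ 𝒞.L y, ∀ e ∈ 𝒞.L v, ¬ 𝒞.H.Adj e d'
        · obtain ⟨d, hd, hun⟩ := hdun
          exact twoz d hd (hgoodany d hd) (fun e he hf =>
            hf.elim (fun h => hp ⟨e, he, h.symm⟩) (hun e he))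
        · push_neg at hdun
          obtain ⟨d₁, d₂, hd₁, hd₂, hdne⟩ : ∃ d₁ d₂, d₁ ∈ 𝒞.L y ∧ d₂ ∈ 𝒞.L y ∧ d₁ ≠ d₂ := by
            have : 1 < (𝒞.L y).card := by rw [hfold y]; omega
            obtain ⟨z₁, hz₁, z₂, hz₂, h⟩ := Finset.one_lt_card.mp this
            exact ⟨z₁, z₂, hz₁, hz₂, h⟩
          obtain ⟨p₁, hp₁, hap₁⟩ := hdun d₁ hd₁
          obtain ⟨p₂, hp₂, hap₂⟩ := hdun d₂ hd₂
          have hpne : p₁ ≠ p₂ := by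
            rintro rfl
            exact hdne (match_right 𝒞 hp₁ hd₁ hd₂ hap₁ hap₂)
          obtain ⟨δ₁, hdrop₁⟩ := exists_drop 𝒞 S hc hd₁ (hgoodany d₁ hd₁) hLne
          obtain ⟨δ₂, hdrop₂⟩ := exists_drop 𝒞 S hc hd₂ (hgoodany d₂ hd₂) hLne
          have hq₁ : p₁ = δ₁ v := (hdrop₁ v hvS).2 p₁ hp₁ (Or.inr hap₁)
          have hq₂ : p₂ = δ₂ v := (hdrop₂ v hvS).2 p₂ hp₂ (Or.inr hap₂)
          have e1 : Λ p₁ = Λ b₂ := by rw [hq₁]; exact key d₁ hd₁ (hgoodany d₁ hd₁) δ₁ hdrop₁ v hvS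
          have e2 : Λ p₂ = Λ b₂ := by rw [hq₂]; exact key d₂ hd₂ (hgoodany d₂ hd₂) δ₂ hdrop₂ v hvS
          exact hpne ((hΛbij v hvS).2.1 (by rw [Finset.mem_coe]; exact hp₁)
            (by rw [Finset.mem_coe]; exact hp₂) (e1.trans e2.symm))
      · obtain ⟨d, hd, hgood⟩ := exists_good_fixed 𝒞 hfold (by omega) hcom hc
        exact twoz d hd hgood (fun e he hf => hf.elim (fun h => hp ⟨e, he, h.symm⟩)
          (fun h => hyv (𝒞.adj_support he hd h).symm))
  · push_neg at hcase
    exact absurd (no_partner_absurd hxy hSin hxS hadj hcom hfold hm hbad hcan hconn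
      hΛbij hΛedge hGScol hGxcol hc
      (fun v hv hxv b hb hA => (hcase v hv hxv) b hb hA)) not_false

lemma exists_edge {G' : SimpleGraph W} (h : ¬ G'.Colorable 1) : ∃ a b, G'.Adj a b := by
  by_contra hno
  push_neg at hno
  exact h ⟨SimpleGraph.Coloring.mk (fun _ => (0 : Fin 1)) (fun {u v} hA => absurd hA (hno u v))⟩

lemma crit_one_vertex {G' : SimpleGraph W}
    (hχ : G'.chromaticNumber = ((1 : ℕ) : ℕ∞))
    (hcrit : ∀ Gs : G'.Subgraph, Gs ≠ ⊤ → Gs.coe.chromaticNumber < ((1 : ℕ) : ℕ∞)) :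
    ∃ z : W, ∀ w : W, w = z := by
  have hne : Nonempty W := by
    by_contra he
    rw [not_nonempty_iff] at he
    rw [G'.chromaticNumber_eq_zero_of_isEmpty] at hχ
    exact one_ne_zero (show (1 : ℕ) = 0 by exact_mod_cast hχ.symm)
  obtain ⟨z⟩ := hne
  refine ⟨z, fun w => ?_⟩
  by_contra hw
  have hz : z ∈ {t : W | t ≠ w} := fun h => hw h.symm
  have hcol := colorable_induce_of_crit {t : W | t ≠ w} (fun h => h rfl) hcrit
  obtain ⟨C⟩ := hcol
  exact (C ⟨z, hz⟩).elim0

lemma crit_two_vertex {G' : SimpleGraph W}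
    (hχ : G'.chromaticNumber = ((2 : ℕ) : ℕ∞))
    (hcrit : ∀ Gs : G'.Subgraph, Gs ≠ ⊤ → Gs.coe.chromaticNumber < ((2 : ℕ) : ℕ∞)) :
    ∃ a b : W, G'.Adj a b ∧ ∀ w : W, w = a ∨ w = b := by
  obtain ⟨a, b, hab⟩ := exists_edge (not_colorable_of_eq hχ (by omega))
  refine ⟨a, b, hab, fun w => ?_⟩
  by_contra hw
  push_neg at hw
  have hcol := colorable_induce_of_crit {t : W | t ≠ w} (fun h => h rfl) hcrit
  obtain ⟨C⟩ := hcol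
  have ha : a ∈ {t : W | t ≠ w} := fun h => hw.1 h.symm
  have hb : b ∈ {t : W | t ≠ w} := fun h => hw.2 h.symm
  exact C.valid (show (G'.induce {t : W | t ≠ w}).Adj ⟨a, ha⟩ ⟨b, hb⟩ from hab)
    (Fin.ext (by
      have h1 := (C ⟨a, ha⟩).2
      have h2 := (C ⟨b, hb⟩).2
      omega))

lemma colorable_extend {G : SimpleGraph V} {x y : V} (hxy : x ≠ y) (hadj : ¬ G.Adj x y)
    {n : ℕ} (h : (G.induce ({x, y}ᶜ : Set V)).Colorable n) : G.Colorable (n + 1) := by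
  obtain ⟨C⟩ := h
  refine ⟨SimpleGraph.Coloring.mk (fun v => if hv : v ∈ ({x, y}ᶜ : Set V)
    then Fin.castLE (by omega) (C ⟨v, hv⟩) else Fin.last n) ?_⟩
  intro u v huv
  by_cases hu : u ∈ ({x, y}ᶜ : Set V) <;> by_cases hv : v ∈ ({x, y}ᶜ : Set V)
  · rw [dif_pos hu, dif_pos hv]
    intro heq
    have : C ⟨u, hu⟩ = C ⟨v, hv⟩ := Fin.castLE_injective _ heq
    exact C.valid (show (G.induce ({x, y}ᶜ : Set V)).Adj ⟨u, hu⟩ ⟨v, hv⟩ from huv) this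
  · rw [dif_pos hu, dif_neg hv]
    intro heq
    have h1 : (Fin.castLE (by omega : n ≤ n + 1) (C ⟨u, hu⟩)).1 = (C ⟨u, hu⟩).1 := rfl
    have h2 := (C ⟨u, hu⟩).2
    have h3 := congrArg Fin.val heq
    rw [h1, Fin.val_last] at h3
    omega
  · rw [dif_neg hu, dif_pos hv]
    intro heq
    have h2 := (C ⟨v, hv⟩).2
    have h3 := congrArg Fin.val heq
    rw [Fin.val_last] at h3
    have h1 : (Fin.castLE (by omega : n ≤ n + 1) (C ⟨v, hv⟩)).1 = (C ⟨v, hv⟩).1 := rfl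
    rw [h1] at h3
    omega
  · exfalso
    simp only [Set.mem_compl_iff, Set.mem_insert_iff, Set.mem_singleton_iff, not_not] at hu hv
    rcases hu with rfl | rfl <;> rcases hv with h' | h'
    · exact (G.loopless.irrefl u) (h' ▸ huv)
    · rw [h'] at huv; exact hadj huv
    · rw [h'] at huv; exact hadj huv.symm
    · exact (G.loopless.irrefl u) (h' ▸ huv)

lemma induce_connected {G' : SimpleGraph W} {n : ℕ}
    (hχ : G'.chromaticNumber = (n : ℕ∞)) (hn : 1 ≤ n)
    (hcrit : ∀ Gs : G'.Subgraph, Gs ≠ ⊤ → Gs.coe.chromaticNumber < (n : ℕ∞)) :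
    ∀ u v : W, G'.Reachable u v := by
  intro u v
  by_contra hr
  have hu : u ∈ {w : W | G'.Reachable u w} := SimpleGraph.Reachable.refl u
  obtain ⟨C1⟩ := colorable_induce_of_crit {w : W | G'.Reachable u w} (hr : _) hcrit
  obtain ⟨C2⟩ := colorable_induce_of_crit {w : W | G'.Reachable u w}ᶜ
    (show u ∉ {w : W | G'.Reachable u w}ᶜ from fun h => h hu) hcrit
  have hcol : G'.Colorable (n - 1) := by
    refine ⟨SimpleGraph.Coloring.mk (fun w => if hw : G'.Reachable u w
      then C1 ⟨w, hw⟩ else C2 ⟨w, hw⟩) ?_⟩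
    intro a b hab
    by_cases ha : G'.Reachable u a <;> by_cases hb : G'.Reachable u b
    · rw [dif_pos ha, dif_pos hb]
      exact C1.valid (show (G'.induce {w : W | G'.Reachable u w}).Adj ⟨a, ha⟩ ⟨b, hb⟩
        from hab)
    · exact absurd (ha.trans hab.reachable) hb
    · exact absurd (hb.trans hab.symm.reachable) ha
    · rw [dif_neg ha, dif_neg hb]
      exact C2.valid (show (G'.induce {w : W | G'.Reachable u w}ᶜ).Adj ⟨a, ha⟩ ⟨b, hb⟩
        from hab)
  exact not_colorable_of_eq hχ (by omega) hcol

lemma not_k2 {G : SimpleGraph V} {x y : V} (hxy : x ≠ y) (hadj : ¬ G.Adj x y)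
    (hcritG : IsKCritical G 2) : False := by
  obtain ⟨u, v, huv⟩ := exists_edge (not_colorable_of_eq hcritG.1 (by omega))
  have hm : ∃ m₀ : V, m₀ ≠ u ∧ m₀ ≠ v := by
    by_cases hx : x = u ∨ x = v
    · refine ⟨y, ?_, ?_⟩
      · rintro rfl
        rcases hx with rfl | h
        · exact hxy rfl
        · exact hadj (h ▸ huv).symm
      · rintro rfl
        rcases hx with h | rfl
        · exact hadj (h ▸ huv)
        · exact hxy rfl
    · push_neg at hx
      exact ⟨x, hx.1, hx.2⟩
  obtain ⟨m₀, hmu, hmv⟩ := hm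
  obtain ⟨C⟩ := colorable_induce_of_crit {t : V | t ≠ m₀} (fun h => h rfl) hcritG.2
  refine C.valid (show (G.induce {t : V | t ≠ m₀}).Adj ⟨u, fun h => hmu h.symm⟩
    ⟨v, fun h => hmv h.symm⟩ from huv) (Fin.ext ?_)
  have h1 := (C ⟨u, fun h => hmu h.symm⟩).2
  have h2 := (C ⟨v, fun h => hmv h.symm⟩).2
  omega

lemma not_k3 {G : SimpleGraph V} {x y : V} (hxy : x ≠ y) (hadj : ¬ G.Adj x y)
    (hcritG : IsKCritical G 3)
    (htwo : ∃ a b : ↥({x,y}ᶜ : Set V), (G.induce ({x,y}ᶜ : Set V)).Adj a b ∧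
      ∀ w : ↥({x,y}ᶜ : Set V), w = a ∨ w = b) : False := by
  classical
  obtain ⟨a, b, hab, hcl⟩ := htwo
  have hG : G.Adj a.1 b.1 := hab
  set av := a.1 with havdef
  set bv := b.1 with hbvdef
  have havbv : av ≠ bv := hG.ne
  have havx : av ≠ x := fun h => a.2 (by simp [havdef ▸ h])
  have havy : av ≠ y := fun h => a.2 (by simp [havdef ▸ h])
  have hbvx : bv ≠ x := fun h => b.2 (by simp [hbvdef ▸ h])
  have hbvy : bv ≠ y := fun h => b.2 (by simp [hbvdef ▸ h])
  have hcl4 : ∀ w : V, w = x ∨ w = y ∨ w = av ∨ w = bv := by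
    intro w
    by_cases h1 : w = x
    · exact Or.inl h1
    by_cases h2 : w = y
    · exact Or.inr (Or.inl h2)
    have hw : w ∈ ({x,y}ᶜ : Set V) := by simp [h1, h2]
    rcases hcl ⟨w, hw⟩ with h | h
    · exact Or.inr (Or.inr (Or.inl (congrArg Subtype.val h)))
    · exact Or.inr (Or.inr (Or.inr (congrArg Subtype.val h)))
  have tf : ∀ p q r : V, G.Adj p q → G.Adj q r → G.Adj p r → False := by
    intro p q r hpq hqr hpr
    have hcard4 : ({x, y, av, bv} : Finset V).card = 4 := by
      have h1 : x ∉ ({y, av, bv} : Finset V) := by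
        simp only [Finset.mem_insert, Finset.mem_singleton]
        push_neg
        exact ⟨hxy, Ne.symm havx, Ne.symm hbvx⟩
      have h2 : y ∉ ({av, bv} : Finset V) := by
        simp only [Finset.mem_insert, Finset.mem_singleton]
        push_neg
        exact ⟨Ne.symm havy, Ne.symm hbvy⟩
      have h3 : av ∉ ({bv} : Finset V) := by
        simp only [Finset.mem_singleton]
        exact havbv
      rw [Finset.card_insert_of_notMem h1, Finset.card_insert_of_notMem h2,
        Finset.card_insert_of_notMem h3, Finset.card_singleton]
    have hsub3 : ({p, q, r} : Finset V).card ≤ 3 := by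
      have i1 := Finset.card_insert_le p ({q, r} : Finset V)
      have i2 := Finset.card_insert_le q ({r} : Finset V)
      have i3 : ({r} : Finset V).card = 1 := Finset.card_singleton r
      omega
    have hm : ∃ m₀ : V, m₀ ∉ ({p, q, r} : Finset V) := by
      by_contra hno
      push_neg at hno
      have hsub : ({x, y, av, bv} : Finset V) ⊆ ({p, q, r} : Finset V) :=
        fun t _ => hno t
      have := Finset.card_le_card hsub
      omega
    obtain ⟨m₀, hm₀⟩ := hm
    simp only [Finset.mem_insert, Finset.mem_singleton] at hm₀
    push_neg at hm₀
    obtain ⟨h1, h2, h3⟩ := hm₀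
    obtain ⟨C⟩ := colorable_induce_of_crit {t : V | t ≠ m₀} (fun h => h rfl) hcritG.2
    have c1 := C.valid (show (G.induce {t : V | t ≠ m₀}).Adj ⟨p, fun h => h1 h.symm⟩
      ⟨q, fun h => h2 h.symm⟩ from hpq)
    have c2 := C.valid (show (G.induce {t : V | t ≠ m₀}).Adj ⟨q, fun h => h2 h.symm⟩
      ⟨r, fun h => h3 h.symm⟩ from hqr)
    have c3 := C.valid (show (G.induce {t : V | t ≠ m₀}).Adj ⟨p, fun h => h1 h.symm⟩
      ⟨r, fun h => h3 h.symm⟩ from hpr)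
    have n1 : (C ⟨p, fun h => h1 h.symm⟩).1 ≠ (C ⟨q, fun h => h2 h.symm⟩).1 :=
      fun h => c1 (Fin.ext h)
    have n2 : (C ⟨q, fun h => h2 h.symm⟩).1 ≠ (C ⟨r, fun h => h3 h.symm⟩).1 :=
      fun h => c2 (Fin.ext h)
    have n3 : (C ⟨p, fun h => h1 h.symm⟩).1 ≠ (C ⟨r, fun h => h3 h.symm⟩).1 :=
      fun h => c3 (Fin.ext h)
    have b1 := (C ⟨p, fun h => h1 h.symm⟩).2
    have b2 := (C ⟨q, fun h => h2 h.symm⟩).2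
    have b3 := (C ⟨r, fun h => h3 h.symm⟩).2
    omega
  apply not_colorable_of_eq hcritG.1 (show 2 < 3 by omega)
  set fa : Fin 2 := if G.Adj x av then 1 else if G.Adj x bv then 0 else 1 with hfa
  set fb : Fin 2 := if G.Adj x av then 0 else if G.Adj x bv then 1 else 0 with hfb
  set fyv : Fin 2 := if G.Adj y av then fb else fa with hfyv
  have hfab : fa ≠ fb := by
    rw [hfa, hfb]
    by_cases h1 : G.Adj x av
    · rw [if_pos h1, if_pos h1]; decide
    · by_cases h2 : G.Adj x bv
      · rw [if_neg h1, if_neg h1, if_pos h2, if_pos h2]; decide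
      · rw [if_neg h1, if_neg h1, if_neg h2, if_neg h2]; decide
  have hfax : G.Adj x av → fa = 1 := fun h => by rw [hfa, if_pos h]
  have hfbx : G.Adj x bv → fb = 1 := fun h => by
    have h1 : ¬ G.Adj x av := fun h1 => tf x av bv h1 hG h
    rw [hfb, if_neg h1, if_pos h]
  have hfya : G.Adj y av → fyv = fb := fun h => by rw [hfyv, if_pos h]
  have hfyb : G.Adj y bv → fyv = fa := fun h => by
    have h1 : ¬ G.Adj y av := fun h1 => tf y av bv h1 hG h
    rw [hfyv, if_neg h1]
  set f : V → Fin 2 := fun w => if w = x then 0 else if w = y then fyv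
    else if w = av then fa else fb with hfdef
  have hfx : f x = 0 := by rw [hfdef]; dsimp only; rw [if_pos rfl]
  have hfy' : f y = fyv := by
    rw [hfdef]; dsimp only; rw [if_neg (Ne.symm hxy), if_pos rfl]
  have hfav : f av = fa := by
    rw [hfdef]; dsimp only; rw [if_neg havx, if_neg havy, if_pos rfl]
  have hfbv : f bv = fb := by
    rw [hfdef]; dsimp only; rw [if_neg hbvx, if_neg hbvy, if_neg (Ne.symm havbv)]
  refine ⟨SimpleGraph.Coloring.mk f ?_⟩
  intro u v huv
  rcases hcl4 u with rfl | rfl | rfl | rfl <;> rcases hcl4 v with rfl | rfl | rfl | rfl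
  · exact absurd huv (G.loopless.irrefl _)
  · exact absurd huv hadj
  · rw [hfx, hfav, hfax huv]; decide
  · rw [hfx, hfbv, hfbx huv]; decide
  · exact absurd huv.symm hadj
  · exact absurd huv (G.loopless.irrefl _)
  · rw [hfy', hfav, hfya huv]; exact Ne.symm hfab
  · rw [hfy', hfbv, hfyb huv]; exact hfab
  · rw [hfav, hfx, hfax huv.symm]; decide
  · rw [hfav, hfy', hfya huv.symm]; exact hfab
  · exact absurd huv (G.loopless.irrefl _)
  · rw [hfav, hfbv]; exact hfab
  · rw [hfbv, hfx, hfbx huv.symm]; decide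
  · rw [hfbv, hfy', hfyb huv.symm]; exact Ne.symm hfab
  · rw [hfbv, hfav]; exact Ne.symm hfab
  · exact absurd huv (G.loopless.irrefl _)

end RC

open RC in
/-- Let `G` be critical and let `x, y` be two non-adjacent vertices
with at most one common neighbor.  If `G − x − y` is robustly critical, then so
is `G`. -/
theorem robustly_critical_of_removing_pair
    {V : Type} (G : SimpleGraph V) (x y : V) (hxy : x ≠ y)
    (hadj : ¬ G.Adj x y)
    (hcommon : (G.neighborSet x ∩ G.neighborSet y).Subsingleton)
    (hcrit : ∃ k, IsKCritical G k)
    (hrob : ∃ k, IsRobustlyKCritical (G.induce ({x, y}ᶜ : Set V)) k) :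
    ∃ k, IsRobustlyKCritical G k := by
  classical
  obtain ⟨k, hk⟩ := hcrit
  obtain ⟨k2, hk21, hk2crit, hk2can⟩ := hrob
  have hxS : x ∉ ({x, y}ᶜ : Set V) := by simp
  have hyS : y ∉ ({x, y}ᶜ : Set V) := by simp
  have hSin : ∀ v, v ∉ ({x, y}ᶜ : Set V) → v = x ∨ v = y := by
    intro v hv
    simp only [Set.mem_compl_iff, not_not] at hv
    simpa using hv
  have hcom : ∀ v₁ v₂ : V, G.Adj x v₁ → G.Adj y v₁ → G.Adj x v₂ → G.Adj y v₂ → v₁ = v₂ :=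
    fun v₁ v₂ h1 h2 h3 h4 => hcommon ⟨h1, h2⟩ ⟨h3, h4⟩
  haveI : Nonempty V := ⟨x⟩
  have hcolk : G.Colorable k := SimpleGraph.chromaticNumber_le_iff_colorable.mp (le_of_eq hk.1)
  have hk1 : 1 ≤ k := by
    have hpos := SimpleGraph.chromaticNumber_pos hcolk
    rw [hk.1] at hpos
    by_contra h
    have h0 : k = 0 := by omega
    rw [h0] at hpos
    simp at hpos
  have hnotG : ¬ G.Colorable (k-1) := not_colorable_of_eq hk.1 (by omega)
  have hScol : (G.induce ({x, y}ᶜ : Set V)).Colorable (k-1) :=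
    colorable_induce_of_crit _ hxS hk.2
  have hk2le : k2 ≤ k - 1 := by
    have h := hScol.chromaticNumber_le
    rw [hk2crit.1] at h
    exact Nat.cast_le.mp h
  have hk2k : 2 ≤ k := by omega
  have hnotS : ¬ (G.induce ({x, y}ᶜ : Set V)).Colorable (k-2) := by
    intro h
    have h2 := colorable_extend hxy hadj h
    rw [show k - 2 + 1 = k - 1 by omega] at h2
    exact hnotG h2
  have hk2ge : k - 1 ≤ k2 := by
    by_contra h
    push_neg at h
    have hc2 : (G.induce ({x, y}ᶜ : Set V)).Colorable k2 :=
      SimpleGraph.chromaticNumber_le_iff_colorable.mp (le_of_eq hk2crit.1)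
    exact hnotS (hc2.mono (by omega))
  have hk2eq : k2 = k - 1 := le_antisymm hk2le hk2ge
  have hk4 : 4 ≤ k := by
    by_contra h
    push_neg at h
    have hk23 : k = 2 ∨ k = 3 := by omega
    rcases hk23 with h2 | h3
    · exact not_k2 hxy hadj (h2 ▸ hk)
    · have hχ2 : (G.induce ({x, y}ᶜ : Set V)).chromaticNumber = ((2:ℕ) : ℕ∞) := by
        rw [hk2crit.1, hk2eq, h3]
      have hcrit2 : ∀ Gs : (G.induce ({x, y}ᶜ : Set V)).Subgraph, Gs ≠ ⊤ →
          Gs.coe.chromaticNumber < ((2:ℕ) : ℕ∞) := by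
        intro Gs hGs
        have h4 := hk2crit.2 Gs hGs
        rwa [hk2eq, h3] at h4
      exact not_k3 hxy hadj (h3 ▸ hk) (crit_two_vertex hχ2 hcrit2)
  have hm3 : 3 ≤ k - 1 := by omega
  refine ⟨k, by omega, hk, ?_⟩
  intro α 𝒞 hfold hbad
  have hcan : ∀ (β : Type) (𝒟 : Cover (G.induce ({x, y}ᶜ : Set V)) β),
      𝒟.IsKFold (k - 1 - 1) → ¬ 𝒟.Colorable → 𝒟.Canonical (k - 1 - 1) := by
    intro β 𝒟 hf hb
    have h := hk2can β 𝒟 (by rwa [show k2 - 1 = k - 1 - 1 by omega]) hb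
    rwa [show k2 - 1 = k - 1 - 1 by omega] at h
  have hconn : ∀ u v : ↥({x, y}ᶜ : Set V), (G.induce ({x, y}ᶜ : Set V)).Reachable u v :=
    induce_connected hk2crit.1 (by omega) hk2crit.2
  obtain ⟨Λ, hΛbij, hΛedge⟩ := exists_lambda hxy hSin hadj hcom hfold hm3 hbad hcan
  have hGxcol : (G.induce {v : V | v ≠ x}).Colorable (k-1) :=
    colorable_induce_of_crit _ (fun h => h rfl) hk.2
  have hGycol : (G.induce {v : V | v ≠ y}).Colorable (k-1) :=
    colorable_induce_of_crit _ (fun h => h rfl) hk.2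
  have hSin_y : ∀ v, v ∉ ({x, y}ᶜ : Set V) → v = y ∨ v = x :=
    fun v hv => (hSin v hv).symm
  have hadj_y : ¬ G.Adj y x := fun h => hadj h.symm
  have hcom_y : ∀ v₁ v₂ : V, G.Adj y v₁ → G.Adj x v₁ → G.Adj y v₂ → G.Adj x v₂ → v₁ = v₂ :=
    fun v₁ v₂ h1 h2 h3 h4 => hcom v₁ v₂ h2 h1 h4 h3
  have hsx := side_structure hxy hSin hxS hadj hcom hfold hm3 hbad hcan hconn
    hΛbij hΛedge hScol hGxcol
  have hsy := side_structure hxy.symm hSin_y hyS hadj_y hcom_y hfold hm3 hbad hcan hconn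
    hΛbij hΛedge hScol hGycol
  have hLne : ∀ w : V, (𝒞.L w).Nonempty := by
    intro w; rw [← Finset.card_pos, hfold w]; omega
  have hxnb : ∃ v, v ∈ ({x, y}ᶜ : Set V) ∧ G.Adj x v := by
    by_contra hno
    push_neg at hno
    obtain ⟨c₀, hc₀⟩ := hLne x
    exact no_partner_absurd hxy hSin hxS hadj hcom hfold hm3 hbad hcan hconn
      hΛbij hΛedge hScol hGxcol hc₀ (fun v hv hxv _ _ _ => (hno v hv hxv).elim)
  have hynb : ∃ v, v ∈ ({x, y}ᶜ : Set V) ∧ G.Adj y v := by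
    by_contra hno
    push_neg at hno
    obtain ⟨d₀, hd₀⟩ := hLne y
    exact no_partner_absurd hxy.symm hSin_y hyS hadj_y hcom_y hfold hm3 hbad hcan hconn
      hΛbij hΛedge hScol hGycol hd₀ (fun v hv hyv _ _ _ => (hno v hv hyv).elim)
  set sx : α → Fin (k-1) := fun c => if h : c ∈ 𝒞.L x then (hsx c h).choose
    else ⟨0, by omega⟩ with hsxdef
  set sy : α → Fin (k-1) := fun c => if h : c ∈ 𝒞.L y then (hsy c h).choose
    else ⟨0, by omega⟩ with hsydef
  have hsxspec : ∀ c, ∀ hc : c ∈ 𝒞.L x, ∀ v, v ∈ ({x, y}ᶜ : Set V) → G.Adj x v →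
      ∃ b ∈ 𝒞.L v, 𝒞.H.Adj c b ∧ Λ b = sx c := by
    intro c hc v hv hxv
    have he : sx c = (hsx c hc).choose := by rw [hsxdef]; exact dif_pos hc
    rw [he]
    exact (hsx c hc).choose_spec v hv hxv
  have hsyspec : ∀ d, ∀ hd : d ∈ 𝒞.L y, ∀ v, v ∈ ({x, y}ᶜ : Set V) → G.Adj y v →
      ∃ b ∈ 𝒞.L v, 𝒞.H.Adj d b ∧ Λ b = sy d := by
    intro d hd v hv hyv
    have he : sy d = (hsy d hd).choose := by rw [hsydef]; exact dif_pos hd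
    rw [he]
    exact (hsy d hd).choose_spec v hv hyv
  set lamF : α → Fin (k-1) := fun a => if a ∈ 𝒞.L x then sx a
    else if a ∈ 𝒞.L y then sy a else Λ a with hlamFdef
  have hlamS : ∀ v, v ∈ ({x, y}ᶜ : Set V) → ∀ a ∈ 𝒞.L v, lamF a = Λ a := by
    intro v hv a ha
    have hvx : v ≠ x := fun e => hxS (e ▸ hv)
    have hvy : v ≠ y := fun e => hyS (e ▸ hv)
    have hax : a ∉ 𝒞.L x := fun h => (Finset.disjoint_left.mp (𝒞.disj hvx) ha) h
    have hay : a ∉ 𝒞.L y := fun h => (Finset.disjoint_left.mp (𝒞.disj hvy) ha) h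
    rw [hlamFdef]
    dsimp only
    rw [if_neg hax, if_neg hay]
  have hlamx : ∀ a ∈ 𝒞.L x, lamF a = sx a := by
    intro a ha
    rw [hlamFdef]
    dsimp only
    rw [if_pos ha]
  have hlamy : ∀ a ∈ 𝒞.L y, lamF a = sy a := by
    intro a ha
    have hax : a ∉ 𝒞.L x := fun h => (Finset.disjoint_left.mp (𝒞.disj (Ne.symm hxy)) ha) h
    rw [hlamFdef]
    dsimp only
    rw [if_neg hax, if_pos ha]
  -- the two "side" edge conditions
  have edgeX : ∀ v, v ∈ ({x, y}ᶜ : Set V) → G.Adj x v → ∀ c ∈ 𝒞.L x, ∀ b ∈ 𝒞.L v,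
      (𝒞.H.Adj c b ↔ lamF c = lamF b) := by
    intro v hv hxv c hc b hb
    obtain ⟨b', hb', hcb', hΛb'⟩ := hsxspec c hc v hv hxv
    rw [hlamx c hc, hlamS v hv b hb]
    constructor
    · intro hA
      have hbb : b = b' := match_right 𝒞 hc hb hb' hA hcb'
      rw [hbb, hΛb']
    · intro heq
      have hbb : b' = b := (hΛbij v hv).2.1 (by rw [Finset.mem_coe]; exact hb')
        (by rw [Finset.mem_coe]; exact hb) (by rw [hΛb', heq])
      rw [← hbb]
      exact hcb'
  have edgeY : ∀ v, v ∈ ({x, y}ᶜ : Set V) → G.Adj y v → ∀ d ∈ 𝒞.L y, ∀ b ∈ 𝒞.L v,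
      (𝒞.H.Adj d b ↔ lamF d = lamF b) := by
    intro v hv hyv d hd b hb
    obtain ⟨b', hb', hdb', hΛb'⟩ := hsyspec d hd v hv hyv
    rw [hlamy d hd, hlamS v hv b hb]
    constructor
    · intro hA
      have hbb : b = b' := match_right 𝒞 hd hb hb' hA hdb'
      rw [hbb, hΛb']
    · intro heq
      have hbb : b' = b := (hΛbij v hv).2.1 (by rw [Finset.mem_coe]; exact hb')
        (by rw [Finset.mem_coe]; exact hb) (by rw [hΛb', heq])
      rw [← hbb]
      exact hdb'
  -- bijectivity on L x and L y
  have bijX : Set.BijOn lamF (𝒞.L x : Set α) Set.univ := by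
    obtain ⟨v₀, hv₀, hxv₀⟩ := hxnb
    have hinj : Set.InjOn lamF (𝒞.L x : Set α) := by
      intro c hc c' hc' heq
      rw [Finset.mem_coe] at hc hc'
      rw [hlamx c hc, hlamx c' hc'] at heq
      obtain ⟨b, hb, hcb, hΛb⟩ := hsxspec c hc v₀ hv₀ hxv₀
      obtain ⟨b', hb', hcb', hΛb'⟩ := hsxspec c' hc' v₀ hv₀ hxv₀
      have hbb : b = b' := (hΛbij v₀ hv₀).2.1 (by rw [Finset.mem_coe]; exact hb)
        (by rw [Finset.mem_coe]; exact hb') (by rw [hΛb, hΛb', heq])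
      exact 𝒞.matching hb hc hc' hcb.symm (by rw [hbb]; exact hcb'.symm)
    refine ⟨fun a _ => Set.mem_univ _, hinj, ?_⟩
    intro t _
    have himg : ((𝒞.L x).image lamF).card = k - 1 := by
      rw [Finset.card_image_of_injOn hinj, hfold x]
    have huniv : (𝒞.L x).image lamF = Finset.univ :=
      Finset.eq_univ_of_card _ (by rw [himg, Fintype.card_fin])
    have ht : t ∈ (𝒞.L x).image lamF := by rw [huniv]; exact Finset.mem_univ t
    obtain ⟨c, hc, hct⟩ := Finset.mem_image.mp ht
    exact ⟨c, by rw [Finset.mem_coe]; exact hc, hct⟩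
  have bijY : Set.BijOn lamF (𝒞.L y : Set α) Set.univ := by
    obtain ⟨v₀, hv₀, hyv₀⟩ := hynb
    have hinj : Set.InjOn lamF (𝒞.L y : Set α) := by
      intro c hc c' hc' heq
      rw [Finset.mem_coe] at hc hc'
      rw [hlamy c hc, hlamy c' hc'] at heq
      obtain ⟨b, hb, hcb, hΛb⟩ := hsyspec c hc v₀ hv₀ hyv₀
      obtain ⟨b', hb', hcb', hΛb'⟩ := hsyspec c' hc' v₀ hv₀ hyv₀
      have hbb : b = b' := (hΛbij v₀ hv₀).2.1 (by rw [Finset.mem_coe]; exact hb)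
        (by rw [Finset.mem_coe]; exact hb') (by rw [hΛb, hΛb', heq])
      exact 𝒞.matching hb hc hc' hcb.symm (by rw [hbb]; exact hcb'.symm)
    refine ⟨fun a _ => Set.mem_univ _, hinj, ?_⟩
    intro t _
    have himg : ((𝒞.L y).image lamF).card = k - 1 := by
      rw [Finset.card_image_of_injOn hinj, hfold y]
    have huniv : (𝒞.L y).image lamF = Finset.univ :=
      Finset.eq_univ_of_card _ (by rw [himg, Fintype.card_fin])
    have ht : t ∈ (𝒞.L y).image lamF := by rw [huniv]; exact Finset.mem_univ t
    obtain ⟨c, hc, hct⟩ := Finset.mem_image.mp ht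
    exact ⟨c, by rw [Finset.mem_coe]; exact hc, hct⟩
  refine ⟨lamF, ?_, ?_⟩
  · intro v
    by_cases hv : v ∈ ({x, y}ᶜ : Set V)
    · exact ((hΛbij v hv).congr (fun a ha => (hlamS v hv a (by rwa [← Finset.mem_coe])).symm))
    · rcases hSin v hv with rfl | rfl
      · exact bijX
      · exact bijY
  · intro u v huv c hc b hb
    by_cases hu : u ∈ ({x, y}ᶜ : Set V) <;> by_cases hv : v ∈ ({x, y}ᶜ : Set V)
    · rw [hlamS u hu c hc, hlamS v hv b hb]
      exact hΛedge u hu v hv huv c hc b hb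
    · rcases hSin v hv with rfl | rfl
      · constructor
        · intro hA
          exact ((edgeX u hu huv.symm b hb c hc).mp hA.symm).symm
        · intro heq
          exact ((edgeX u hu huv.symm b hb c hc).mpr heq.symm).symm
      · constructor
        · intro hA
          exact ((edgeY u hu huv.symm b hb c hc).mp hA.symm).symm
        · intro heq
          exact ((edgeY u hu huv.symm b hb c hc).mpr heq.symm).symm
    · rcases hSin u hu with rfl | rfl
      · exact edgeX v hv huv c hc b hb
      · exact edgeY v hv huv c hc b hb
    · rcases hSin u hu with rfl | rfl <;> rcases hSin v hv with rfl | rfl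
      · exact absurd huv (G.loopless.irrefl _)
      · exact absurd huv hadj
      · exact absurd huv.symm hadj
      · exact absurd huv (G.loopless.irrefl _)
end
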